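/- arXiv:2509.00445 — 4 statements merged into one kernel-verified Lean document; each statement's English description precedes it below -/
import Mathlib

section
/- The number of elements of the interval [1, w] in the absolute order on S_n, where w = (1 2 ... n), equals the Catalan number C_n = (1/(n+1)) · binomial(2n, n). -/
open Equiv

noncomputable def wordLen {G : Type*} [Group G] (R : Set G) (g : G) : ℕ :=
  sInf {k | ∃ l : List G, (∀ x ∈ l, x ∈ R) ∧ l.length = k ∧ l.prod = g}

/-- Reflection length with respect to the set of all transpositions. -/
noncomputable def reflLen {n : ℕ} (σ : Perm (Fin n)) : ℕ :=
  wordLen {τ : Perm (Fin n) | τ.IsSwap} σ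

/-- Absolute order on the symmetric group. -/
noncomputable def absLe {n : ℕ} (u v : Perm (Fin n)) : Prop :=
  reflLen u + reflLen (u⁻¹ * v) = reflLen v

/-!
The reflection length of a permutation `σ` of a finite type `α` is `|α|` minus the number of
cycles of `σ`, which is the codimension of the space of `σ`-invariant functions `α → ℚ`. In this
linear-algebraic form `u ≤ v` in absolute order makes every `v`-invariant function `u`-invariant,
so `u` fixes the fixed points of `v` and preserves its cycles.

Sort the permutations `π ≤ c` below the long cycle `c = (0 1 … n)` by `j = π n`. Left
multiplication by the transposition `(j n)` identifies this fiber with the permutations fixing `n`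
below `(j n) c`; removing `n` from its cycle leaves the product of the disjoint cycles `(0 … j-1)`
and `(j … n-1)`, and the interval below a product of disjoint permutations is the product of their
intervals. The interval sizes therefore satisfy the Catalan recursion
`C (n + 1) = ∑ j ≤ n, C j * C (n - j)`.
-/

open Module

theorem Submodule.finrank_inf_ker_add_one {K V : Type*} [Field K] [AddCommGroup V] [Module K V]
    [FiniteDimensional K V] {p : Submodule K V} {φ : V →ₗ[K] K} {v : V} (hv : v ∈ p)
    (hφv : φ v ≠ 0) : finrank K ↥(p ⊓ LinearMap.ker φ) + 1 = finrank K p := by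
  have hsup : p ⊔ LinearMap.ker φ = ⊤ :=
    top_le_iff.mp <| (φ.span_singleton_sup_ker_eq_top hφv).symm.le.trans <|
      sup_le_sup_right ((Submodule.span_singleton_le_iff_mem v p).mpr hv) _
  have hφ : φ ≠ 0 := fun h => hφv (by simp [h])
  have := Submodule.finrank_sup_add_finrank_inf_eq p (LinearMap.ker φ)
  have := Module.Dual.finrank_ker_add_one_of_ne_zero hφ
  rw [hsup, finrank_top] at *
  omega

namespace Equiv.Perm

section FixedFunctions

variable {α : Type*}

def fixedFunctions (σ : Perm α) : Submodule ℚ (α → ℚ) where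
  carrier := {f | ∀ x, f (σ x) = f x}
  add_mem' hf hg x := by simp [hf x, hg x]
  zero_mem' _ := rfl
  smul_mem' c f hf x := by simp [hf x]

theorem mem_fixedFunctions {σ : Perm α} {f : α → ℚ} :
    f ∈ fixedFunctions σ ↔ ∀ x, f (σ x) = f x := Iff.rfl

theorem fixedFunctions_one : fixedFunctions (1 : Perm α) = ⊤ :=
  eq_top_iff.mpr fun _ _ _ => rfl

theorem inf_le_fixedFunctions_mul (π ρ : Perm α) :
    fixedFunctions π ⊓ fixedFunctions ρ ≤ fixedFunctions (π * ρ) := by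
  rintro f ⟨hπ, hρ⟩ x
  rw [mul_apply, hπ, hρ]

theorem Disjoint.fixedFunctions_mul {σ τ : Perm α} (h : Disjoint σ τ) :
    fixedFunctions (σ * τ) = fixedFunctions σ ⊓ fixedFunctions τ := by
  refine le_antisymm (fun f hf => ⟨fun x => ?_, fun x => ?_⟩) (inf_le_fixedFunctions_mul σ τ)
  · rcases h x with hσ | hτ
    · rw [hσ]
    · simpa [hτ] using hf x
  · rcases h x with hσ | hτ
    · rcases h (τ x) with hσ' | hτ'
      · simpa [hσ'] using hf x
      · rw [τ.injective hτ']
    · rw [hτ]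

theorem Disjoint.fixedFunctions_sup {σ τ : Perm α} (h : Disjoint σ τ) :
    fixedFunctions σ ⊔ fixedFunctions τ = ⊤ := by
  classical
  refine eq_top_iff.mpr fun f _ => Submodule.mem_sup.mpr
    ⟨fun x => if σ x = x then f x else 0, fun x => ?_,
      fun x => if σ x = x then 0 else f x, fun x => ?_,
      funext fun x => by by_cases σ x = x <;> simp [*]⟩
  · by_cases hx : σ x = x
    · rw [hx]
    · simp [hx]
  · rcases h x with hσ | hτ
    · have hτx : σ (τ x) = τ x := (h (τ x)).elim id fun h' => by rw [τ.injective h', hσ]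
      simp [hσ, hτx]
    · rw [hτ]

theorem single_mem_fixedFunctions [DecidableEq α] {σ : Perm α} {x : α} (hx : σ x = x) :
    Pi.single x (1 : ℚ) ∈ fixedFunctions σ := fun z => by
  by_cases hz : z = x
  · rw [hz, hx]
  · rw [Pi.single_eq_of_ne hz, Pi.single_eq_of_ne (fun h => hz (σ.injective (h.trans hx.symm)))]

theorem fixedFunctions_swap_mul [DecidableEq α] {σ : Perm α} {x y : α} (hx : σ x = x) :
    fixedFunctions (swap x y * σ) =
      fixedFunctions σ ⊓
        LinearMap.ker ((LinearMap.proj x : (α → ℚ) →ₗ[ℚ] ℚ) - LinearMap.proj y) := by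
  have hswap : ∀ f : α → ℚ, f x = f y → ∀ z, f (swap x y z) = f z := by
    intro f hf z
    rcases eq_or_ne z x with rfl | hzx
    · rw [swap_apply_left, hf]
    rcases eq_or_ne z y with rfl | hzy
    · rw [swap_apply_right, hf]
    · rw [swap_apply_of_ne_of_ne hzx hzy]
  ext f
  simp only [Submodule.mem_inf, mem_fixedFunctions, LinearMap.mem_ker, LinearMap.sub_apply,
    LinearMap.proj_apply, sub_eq_zero, mul_apply]
  constructor
  · intro h
    have hxy : f x = f y := by simpa [hx] using (h x).symm
    exact ⟨fun z => by rw [← h z, hswap f hxy], hxy⟩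
  · rintro ⟨h, hxy⟩ z
    rw [hswap f hxy, h]

variable [Fintype α]

/-- `fixCodim σ` is `|α|` minus the number of cycles of `σ`: the indicator functions of the cycles
form a basis of `fixedFunctions σ`. -/
noncomputable def fixCodim (σ : Perm α) : ℕ :=
  Fintype.card α - finrank ℚ (fixedFunctions σ)

theorem finrank_fixedFunctions_le (σ : Perm α) :
    finrank ℚ (fixedFunctions σ) ≤ Fintype.card α :=
  (Submodule.finrank_le _).trans_eq (Module.finrank_fintype_fun_eq_card ℚ)

@[simp]
theorem fixCodim_one : fixCodim (1 : Perm α) = 0 := by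
  rw [fixCodim, fixedFunctions_one, finrank_top, finrank_fintype_fun_eq_card, Nat.sub_self]

theorem finrank_fixedFunctions_add_le (π ρ : Perm α) :
    finrank ℚ (fixedFunctions π) + finrank ℚ (fixedFunctions ρ) ≤
      Fintype.card α + finrank ℚ ↥(fixedFunctions π ⊓ fixedFunctions ρ) := by
  rw [← Submodule.finrank_sup_add_finrank_inf_eq]
  have := (Submodule.finrank_le (fixedFunctions π ⊔ fixedFunctions ρ)).trans_eq
    (Module.finrank_fintype_fun_eq_card ℚ)
  omega

theorem fixCodim_mul_le (π ρ : Perm α) : fixCodim (π * ρ) ≤ fixCodim π + fixCodim ρ := by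
  have := finrank_fixedFunctions_add_le π ρ
  have := Submodule.finrank_mono (inf_le_fixedFunctions_mul π ρ)
  have := finrank_fixedFunctions_le π
  have := finrank_fixedFunctions_le ρ
  unfold fixCodim
  omega

theorem fixCodim_le_add_fixCodim_inv_mul (u v : Perm α) :
    fixCodim v ≤ fixCodim u + fixCodim (u⁻¹ * v) := by
  simpa using fixCodim_mul_le u (u⁻¹ * v)

theorem fixedFunctions_mul_of_fixCodim_add {π ρ : Perm α}
    (h : fixCodim π + fixCodim ρ = fixCodim (π * ρ)) :
    fixedFunctions (π * ρ) = fixedFunctions π ⊓ fixedFunctions ρ := by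
  refine (Submodule.eq_of_le_of_finrank_le (inf_le_fixedFunctions_mul π ρ) ?_).symm
  have := finrank_fixedFunctions_add_le π ρ
  have := finrank_fixedFunctions_le π
  have := finrank_fixedFunctions_le ρ
  have := finrank_fixedFunctions_le (π * ρ)
  unfold fixCodim at h
  omega

theorem Disjoint.fixCodim_mul {σ τ : Perm α} (h : Disjoint σ τ) :
    fixCodim (σ * τ) = fixCodim σ + fixCodim τ := by
  have := Submodule.finrank_sup_add_finrank_inf_eq (fixedFunctions σ) (fixedFunctions τ)
  rw [h.fixedFunctions_sup, ← h.fixedFunctions_mul, finrank_top,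
    finrank_fintype_fun_eq_card] at this
  have := finrank_fixedFunctions_le σ
  have := finrank_fixedFunctions_le τ
  unfold fixCodim
  omega

variable [DecidableEq α]

theorem fixCodim_swap_mul_of_apply_eq {σ : Perm α} {x y : α} (hx : σ x = x) (hy : y ≠ x) :
    fixCodim (swap x y * σ) = fixCodim σ + 1 := by
  have := Submodule.finrank_inf_ker_add_one (single_mem_fixedFunctions hx)
    (φ := (LinearMap.proj x : (α → ℚ) →ₗ[ℚ] ℚ) - LinearMap.proj y) (by simp [Pi.single_eq_of_ne hy])
  rw [← fixedFunctions_swap_mul hx] at this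
  have := finrank_fixedFunctions_le σ
  unfold fixCodim
  omega

theorem fixCodim_swap {x y : α} (h : x ≠ y) : fixCodim (swap x y) = 1 := by
  simpa using fixCodim_swap_mul_of_apply_eq (σ := 1) (x := x) rfl h.symm

theorem fixCodim_list_prod_le {l : List (Perm α)} (hl : ∀ τ ∈ l, τ.IsSwap) :
    fixCodim l.prod ≤ l.length := by
  induction l with
  | nil => simp
  | cons τ l ih =>
    obtain ⟨a, b, hab, rfl⟩ := hl τ List.mem_cons_self
    calc fixCodim (swap a b * l.prod) ≤ fixCodim (swap a b) + fixCodim l.prod := fixCodim_mul_le _ _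
      _ ≤ 1 + l.length := by
        rw [fixCodim_swap hab]
        exact Nat.add_le_add_left (ih fun τ hτ => hl τ (List.mem_cons_of_mem _ hτ)) 1
      _ = (swap a b :: l).length := by simp [Nat.add_comm]

end FixedFunctions

section AbsoluteOrder

variable {α : Type*} [DecidableEq α]

noncomputable def swapLen (σ : Perm α) : ℕ :=
  wordLen {τ : Perm α | τ.IsSwap} σ

theorem swapLen_list_prod_le {l : List (Perm α)} (hl : ∀ τ ∈ l, τ.IsSwap) :
    swapLen l.prod ≤ l.length :=
  Nat.sInf_le ⟨l, hl, rfl, rfl⟩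

def AbsLE (u v : Perm α) : Prop :=
  swapLen u + swapLen (u⁻¹ * v) = swapLen v

variable [Fintype α]

theorem exists_swap_list_length_eq_swapLen (σ : Perm α) :
    ∃ l : List (Perm α), (∀ τ ∈ l, τ.IsSwap) ∧ l.length = swapLen σ ∧ l.prod = σ := by
  obtain ⟨l, hprod, hswap⟩ := (truncSwapFactors σ).out
  exact Nat.sInf_mem (s := {k | ∃ l : List (Perm α), (∀ τ ∈ l, τ ∈ {τ : Perm α | τ.IsSwap}) ∧
    l.length = k ∧ l.prod = σ}) ⟨l.length, l, hswap, rfl, hprod⟩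

theorem swapLen_swap_mul_le {a b : α} (hab : a ≠ b) (σ : Perm α) :
    swapLen (swap a b * σ) ≤ swapLen σ + 1 := by
  obtain ⟨l, hl, hlen, rfl⟩ := exists_swap_list_length_eq_swapLen σ
  rw [← hlen, ← List.prod_cons]
  refine swapLen_list_prod_le fun τ hτ => ?_
  rcases List.mem_cons.mp hτ with rfl | hτ
  · exact ⟨a, b, hab, rfl⟩
  · exact hl τ hτ

theorem swapLen_le_fixCodim (σ : Perm α) : swapLen σ ≤ fixCodim σ := by
  obtain ⟨k, hk⟩ : ∃ k, fixCodim σ = k := ⟨_, rfl⟩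
  induction k using Nat.strong_induction_on generalizing σ with
  | _ k ih =>
  rcases eq_or_ne σ 1 with rfl | hσ
  · simpa using swapLen_list_prod_le (l := []) (by simp)
  obtain ⟨x, hx⟩ : ∃ x, σ x ≠ x := by simpa [Perm.ext_iff] using hσ
  have hfix : (swap x (σ x) * σ) x = x := by simp [swap_apply_right]
  have hσ : swap x (σ x) * (swap x (σ x) * σ) = σ := swap_mul_self_mul _ _ _
  have hcod := fixCodim_swap_mul_of_apply_eq hfix hx
  rw [hσ] at hcod
  calc swapLen σ = swapLen (swap x (σ x) * (swap x (σ x) * σ)) := by rw [hσ]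
    _ ≤ swapLen (swap x (σ x) * σ) + 1 := swapLen_swap_mul_le hx.symm _
    _ ≤ fixCodim σ := by have := ih _ (by omega) (swap x (σ x) * σ) rfl; omega

theorem swapLen_eq_fixCodim (σ : Perm α) : swapLen σ = fixCodim σ := by
  refine le_antisymm (swapLen_le_fixCodim σ) ?_
  obtain ⟨l, hl, hlen, rfl⟩ := exists_swap_list_length_eq_swapLen σ
  exact hlen ▸ fixCodim_list_prod_le hl

theorem absLE_iff_fixCodim {u v : Perm α} :
    AbsLE u v ↔ fixCodim u + fixCodim (u⁻¹ * v) = fixCodim v := by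
  simp only [AbsLE, swapLen_eq_fixCodim]

theorem one_absLE (v : Perm α) : AbsLE 1 v :=
  absLE_iff_fixCodim.mpr (by simp)

theorem AbsLE.fixedFunctions_le {u v : Perm α} (h : AbsLE u v) :
    fixedFunctions v ≤ fixedFunctions u := by
  have h' : fixCodim u + fixCodim (u⁻¹ * v) = fixCodim (u * (u⁻¹ * v)) := by
    rw [mul_inv_cancel_left]
    exact absLE_iff_fixCodim.mp h
  have := fixedFunctions_mul_of_fixCodim_add h'
  rw [mul_inv_cancel_left] at this
  exact this ▸ inf_le_left

theorem AbsLE.apply_eq_self {u v : Perm α} (h : AbsLE u v) {x : α} (hx : v x = x) : u x = x := by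
  have := h.fixedFunctions_le (single_mem_fixedFunctions hx) x
  by_contra hne
  simp [Pi.single_eq_of_ne hne] at this

theorem AbsLE.support_subset {u v : Perm α} (h : AbsLE u v) : u.support ⊆ v.support :=
  fun x => by simpa only [mem_support, not_imp_not] using h.apply_eq_self

theorem AbsLE.apply_mem_iff {u v : Perm α} (h : AbsLE u v) {s : Set α}
    (hs : ∀ z, v z ∈ s ↔ z ∈ s) (z : α) : u z ∈ s ↔ z ∈ s := by
  classical
  have hv : s.indicator (1 : α → ℚ) ∈ fixedFunctions v := fun x => by
    simp only [Set.indicator_apply, hs, Pi.one_apply]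
  have := h.fixedFunctions_le hv z
  by_cases hz : z ∈ s <;> by_cases huz : u z ∈ s <;> simp_all

theorem absLE_swap_mul_iff_of_apply_eq {π C : Perm α} {x : α} (hπ : π x = x) :
    AbsLE π (swap x (C x) * C) ↔ AbsLE π C := by
  rcases eq_or_ne (C x) x with hCx | hCx
  · rw [hCx, swap_self, ← one_def, one_mul]
  set C' := swap x (C x) * C
  have hC'x : C' x = x := by simp [C', swap_apply_right]
  have hC : fixCodim C = fixCodim C' + 1 := by
    conv_lhs => rw [← swap_mul_self_mul x (C x) C]
    exact fixCodim_swap_mul_of_apply_eq hC'x hCx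
  have hπinv : π⁻¹ x = x := inv_eq_iff_eq.mpr hπ.symm
  have hconj : π⁻¹ * C = swap x (π⁻¹ (C x)) * (π⁻¹ * C') := by
    rw [show swap x (π⁻¹ (C x)) = π⁻¹ * swap x (C x) * π⁻¹⁻¹ by rw [← swap_apply_apply, hπinv]]
    simp [C', mul_assoc]
  have hπC : fixCodim (π⁻¹ * C) = fixCodim (π⁻¹ * C') + 1 := by
    rw [hconj]
    exact fixCodim_swap_mul_of_apply_eq (by rw [mul_apply, hC'x, hπinv])
      fun h => hCx ((inv_eq_iff_eq.mp h).trans hπ)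
  simp only [absLE_iff_fixCodim]
  omega

theorem card_absLE_and_apply_eq_self (C : Perm α) (x : α) :
    Nat.card {π // AbsLE π C ∧ π x = x} = Nat.card {π // AbsLE π (swap x (C x) * C)} := by
  have hfix : (swap x (C x) * C) x = x := by simp [swap_apply_right]
  refine Nat.card_congr (Equiv.subtypeEquivRight fun π => ⟨fun h => ?_, fun h => ?_⟩)
  · exact (absLE_swap_mul_iff_of_apply_eq h.2).mpr h.1
  · have hπ := h.apply_eq_self hfix
    exact ⟨(absLE_swap_mul_iff_of_apply_eq hπ).mp h, hπ⟩

/-- `hC` says that `x` and `y` lie in one cycle of `C`, which `swap y x` splits in two. -/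
theorem card_absLE_and_apply_eq {C : Perm α} {x y : α} (hxy : y ≠ x)
    (hC : fixCodim C = fixCodim (swap y x * C) + 1) :
    Nat.card {π // AbsLE π C ∧ π x = y} = Nat.card {π // AbsLE π (swap y x * C) ∧ π x = x} := by
  refine Nat.card_congr ((Equiv.mulLeft (swap y x)).subtypeEquiv fun π => ?_)
  have happ : (swap y x * π) x = x ↔ π x = y := by
    rw [mul_apply, swap_apply_eq_iff, swap_apply_right]
  simp only [coe_mulLeft, happ]
  refine and_congr_left fun hπ => ?_
  have hcod : fixCodim π = fixCodim (swap y x * π) + 1 := by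
    conv_lhs => rw [← swap_mul_self_mul y x π]
    rw [swap_comm]
    exact fixCodim_swap_mul_of_apply_eq (by simp [hπ]) hxy
  have hinv : (swap y x * π)⁻¹ * (swap y x * C) = π⁻¹ * C := by group
  rw [absLE_iff_fixCodim, absLE_iff_fixCodim, hinv]
  omega

theorem support_mul_subset {s : Finset α} {σ τ : Perm α} (hσ : σ.support ⊆ s) (hτ : τ.support ⊆ s) :
    (σ * τ).support ⊆ s :=
  (support_mul_le σ τ).trans (Finset.union_subset hσ hτ)

theorem disjoint_of_support_subset {s : Finset α} {σ τ : Perm α} (hσ : σ.support ⊆ s)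
    (hτ : τ.support ⊆ sᶜ) : Disjoint σ τ :=
  disjoint_iff_disjoint_support.mpr (disjoint_compl_right.mono hσ hτ)

theorem Disjoint.mul_apply_mem_support_iff {v₁ v₂ : Perm α} (h : Disjoint v₁ v₂) (z : α) :
    (v₁ * v₂) z ∈ v₁.support ↔ z ∈ v₁.support := by
  by_cases hz : z ∈ v₁.support
  · rw [mul_apply, (h z).resolve_left (mem_support.mp hz)]
    exact iff_of_true (apply_mem_support.mpr hz) hz
  · rw [h.commute.eq, mul_apply, notMem_support.mp hz]
    refine iff_of_false (fun hmem => hz ?_) hz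
    rwa [← v₂.injective ((h (v₂ z)).resolve_left (mem_support.mp hmem))]

theorem absLE_mul_mul_iff {s : Finset α} {π₁ π₂ v₁ v₂ : Perm α} (hπ₁ : π₁.support ⊆ s)
    (hv₁ : v₁.support ⊆ s) (hπ₂ : π₂.support ⊆ sᶜ) (hv₂ : v₂.support ⊆ sᶜ) :
    AbsLE (π₁ * π₂) (v₁ * v₂) ↔ AbsLE π₁ v₁ ∧ AbsLE π₂ v₂ := by
  have h₁ : (π₁⁻¹ * v₁).support ⊆ s := support_mul_subset (by rwa [support_inv]) hv₁
  have h₂ : (π₂⁻¹ * v₂).support ⊆ sᶜ := support_mul_subset (by rwa [support_inv]) hv₂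
  have hcomm : Commute (π₁⁻¹ * v₁) π₂⁻¹ :=
    (disjoint_of_support_subset h₁ (by rwa [support_inv])).commute
  have hinv : (π₁ * π₂)⁻¹ * (v₁ * v₂) = (π₁⁻¹ * v₁) * (π₂⁻¹ * v₂) := by
    calc (π₁ * π₂)⁻¹ * (v₁ * v₂) = π₂⁻¹ * (π₁⁻¹ * v₁) * v₂ := by group
      _ = (π₁⁻¹ * v₁) * (π₂⁻¹ * v₂) := by rw [← hcomm.eq, mul_assoc]
  simp only [absLE_iff_fixCodim, hinv, (disjoint_of_support_subset hπ₁ hπ₂).fixCodim_mul,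
    (disjoint_of_support_subset h₁ h₂).fixCodim_mul,
    (disjoint_of_support_subset hv₁ hv₂).fixCodim_mul]
  have := fixCodim_le_add_fixCodim_inv_mul π₁ v₁
  have := fixCodim_le_add_fixCodim_inv_mul π₂ v₂
  omega

theorem mul_inj_of_support_subset {s : Finset α} {π₁ π₂ π₁' π₂' : Perm α}
    (h₁ : π₁.support ⊆ s) (h₁' : π₁'.support ⊆ s) (h₂ : π₂.support ⊆ sᶜ)
    (h₂' : π₂'.support ⊆ sᶜ) : π₁ * π₂ = π₁' * π₂' ↔ π₁ = π₁' ∧ π₂ = π₂' := by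
  refine ⟨fun heq => ?_, fun ⟨h, h'⟩ => h ▸ h' ▸ rfl⟩
  have heq : π₁'⁻¹ * π₁ = π₂' * π₂⁻¹ := by
    rw [inv_mul_eq_iff_eq_mul, ← mul_assoc, eq_mul_inv_iff_mul_eq, heq]
  have hs : (π₁'⁻¹ * π₁).support ⊆ s := support_mul_subset (by rwa [support_inv]) h₁
  have hsc : (π₁'⁻¹ * π₁).support ⊆ sᶜ := heq ▸ support_mul_subset h₂' (by rwa [support_inv])
  have h1 : π₁'⁻¹ * π₁ = 1 := support_eq_empty_iff.mp
    (Finset.subset_empty.mp (s.inter_compl ▸ Finset.subset_inter hs hsc))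
  have h2 : π₂' * π₂⁻¹ = 1 := heq ▸ h1
  exact ⟨(inv_mul_eq_one.mp h1).symm, (mul_inv_eq_one.mp h2).symm⟩

theorem exists_mul_eq_of_apply_mem_iff {s : Finset α} {π : Perm α} (hs : ∀ z, π z ∈ s ↔ z ∈ s) :
    ∃ π₁ π₂ : Perm α, π₁.support ⊆ s ∧ π₂.support ⊆ sᶜ ∧ π₁ * π₂ = π := by
  have hsc : ∀ z, π z ∉ s ↔ z ∉ s := fun z => (hs z).not
  refine ⟨ofSubtype (π.subtypePerm hs), ofSubtype (π.subtypePerm (p := (· ∉ s)) hsc),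
    fun z hz => by_contra fun hzs => mem_support.mp hz (ofSubtype_subtypePerm_of_not_mem hs hzs),
    fun z hz => Finset.mem_compl.mpr fun hzs => mem_support.mp hz
      (ofSubtype_subtypePerm_of_not_mem (p := (· ∉ s)) hsc (not_not.mpr hzs)), ?_⟩
  ext z
  by_cases hz : z ∈ s
  · rw [mul_apply, ofSubtype_subtypePerm_of_not_mem (p := (· ∉ s)) hsc (not_not.mpr hz),
      ofSubtype_subtypePerm_of_mem hs hz]
  · rw [mul_apply, ofSubtype_subtypePerm_of_mem (p := (· ∉ s)) hsc hz,
      ofSubtype_subtypePerm_of_not_mem hs ((hs z).not.mpr hz)]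

theorem Disjoint.card_absLE_mul {v₁ v₂ : Perm α} (h : Disjoint v₁ v₂) :
    Nat.card {π // AbsLE π (v₁ * v₂)} =
      Nat.card {π // AbsLE π v₁} * Nat.card {π // AbsLE π v₂} := by
  have hv₂ : v₂.support ⊆ v₁.supportᶜ :=
    le_compl_iff_disjoint_left.mpr (disjoint_iff_disjoint_support.mp h)
  have hsupp : ∀ p : {π // AbsLE π v₁} × {π // AbsLE π v₂},
      p.1.1.support ⊆ v₁.support ∧ p.2.1.support ⊆ v₁.supportᶜ :=
    fun p => ⟨p.1.2.support_subset, p.2.2.support_subset.trans hv₂⟩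
  rw [← Nat.card_prod]
  symm
  refine Nat.card_congr (Equiv.ofBijective (fun p => ⟨p.1.1 * p.2.1,
    (absLE_mul_mul_iff (hsupp p).1 subset_rfl (hsupp p).2 hv₂).mpr ⟨p.1.2, p.2.2⟩⟩) ⟨?_, ?_⟩)
  · intro p q hpq
    obtain ⟨h₁, h₂⟩ := (mul_inj_of_support_subset (hsupp p).1 (hsupp q).1 (hsupp p).2
      (hsupp q).2).mp (congrArg Subtype.val hpq)
    exact Prod.ext (Subtype.ext h₁) (Subtype.ext h₂)
  · rintro ⟨π, hπ⟩
    obtain ⟨π₁, π₂, h₁, h₂, rfl⟩ := exists_mul_eq_of_apply_mem_iff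
      (hπ.apply_mem_iff (s := ↑v₁.support) h.mul_apply_mem_support_iff)
    have := (absLE_mul_mul_iff h₁ subset_rfl h₂ hv₂).mp hπ
    exact ⟨(⟨π₁, this.1⟩, ⟨π₂, this.2⟩), rfl⟩

end AbsoluteOrder

section Embedding

variable {α β : Type*} (e : α ↪ β)

theorem exists_viaEmbedding_eq {π : Perm β} (hπ : ∀ z ∉ Set.range e, π z = z) :
    ∃ ρ : Perm α, ρ.viaEmbedding e = π := by
  classical
  obtain ⟨σ, hσ⟩ := (Perm.subtypeEquivSubtypePerm (· ∈ Set.range e)).surjective ⟨π, hπ⟩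
  refine ⟨(Equiv.ofInjective e e.injective).symm.permCongr σ, Equiv.ext fun z => ?_⟩
  by_cases hz : z ∈ Set.range e
  · obtain ⟨x, rfl⟩ := hz
    have hx := congrArg (fun f => f.1 (e x)) hσ
    rw [subtypeEquivSubtypePerm_apply_of_mem σ ⟨x, rfl⟩] at hx
    rw [viaEmbedding_apply, permCongr_apply, symm_symm, apply_ofInjective_symm e.injective]
    exact hx
  · rw [viaEmbedding_apply_of_notMem _ _ _ hz, hπ z hz]

theorem viaEmbedding_swap [DecidableEq α] [DecidableEq β] (a b : α) :
    (swap a b).viaEmbedding e = swap (e a) (e b) := by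
  ext z
  by_cases hz : z ∈ Set.range e
  · obtain ⟨x, rfl⟩ := hz
    rw [viaEmbedding_apply, swap_apply_def, swap_apply_def]
    simp only [e.injective.eq_iff]
    split_ifs <;> rfl
  · rw [viaEmbedding_apply_of_notMem _ _ _ hz,
      swap_apply_of_ne_of_ne (fun h => hz ⟨a, h.symm⟩) (fun h => hz ⟨b, h.symm⟩)]

theorem finrank_fixedFunctions_viaEmbedding_le [Fintype α] [Fintype β] (ρ : Perm α) :
    finrank ℚ (fixedFunctions (ρ.viaEmbedding e)) ≤
      finrank ℚ (fixedFunctions ρ) + (Fintype.card β - Fintype.card α) := by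
  classical
  let Φ : fixedFunctions (ρ.viaEmbedding e) →ₗ[ℚ] fixedFunctions ρ × (↥(Set.range e)ᶜ → ℚ) :=
    { toFun f := (⟨f.1 ∘ e, fun x => by simpa [viaEmbedding_apply] using f.2 (e x)⟩,
        fun y => f.1 y)
      map_add' _ _ := rfl
      map_smul' _ _ := rfl }
  have hΦ : Function.Injective Φ := by
    intro f g hfg
    ext z
    by_cases hz : z ∈ Set.range e
    · obtain ⟨x, rfl⟩ := hz
      exact congrFun (congrArg Subtype.val (congrArg Prod.fst hfg)) x
    · exact congrFun (congrArg Prod.snd hfg) ⟨z, hz⟩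
  have := LinearMap.finrank_le_finrank_of_injective hΦ
  rwa [Module.finrank_prod, Module.finrank_fintype_fun_eq_card, Fintype.card_compl_set,
    Set.card_range_of_injective e.injective] at this

variable [Fintype α] [DecidableEq α] [DecidableEq β]

theorem swapLen_viaEmbedding_le (ρ : Perm α) : swapLen (ρ.viaEmbedding e) ≤ swapLen ρ := by
  obtain ⟨l, hl, hlen, rfl⟩ := exists_swap_list_length_eq_swapLen ρ
  rw [← hlen, ← viaEmbeddingHom_apply, map_list_prod, ← List.length_map (viaEmbeddingHom e)]
  refine swapLen_list_prod_le fun τ hτ => ?_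
  obtain ⟨σ, hσ, rfl⟩ := List.mem_map.mp hτ
  obtain ⟨a, b, hab, rfl⟩ := hl σ hσ
  exact ⟨e a, e b, e.injective.ne hab, viaEmbedding_swap e a b⟩

variable [Fintype β]

theorem fixCodim_viaEmbedding (ρ : Perm α) : fixCodim (ρ.viaEmbedding e) = fixCodim ρ := by
  have := swapLen_viaEmbedding_le e ρ
  rw [swapLen_eq_fixCodim, swapLen_eq_fixCodim] at this
  have := finrank_fixedFunctions_viaEmbedding_le e ρ
  have := finrank_fixedFunctions_le ρ
  have := Fintype.card_le_of_embedding e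
  unfold fixCodim at *
  omega

theorem absLE_viaEmbedding_iff {ρ v : Perm α} :
    AbsLE (ρ.viaEmbedding e) (v.viaEmbedding e) ↔ AbsLE ρ v := by
  simp only [absLE_iff_fixCodim, ← viaEmbeddingHom_apply, ← map_inv, ← map_mul]
  simp only [viaEmbeddingHom_apply, fixCodim_viaEmbedding]

theorem card_absLE_viaEmbedding (v : Perm α) :
    Nat.card {π // AbsLE π (v.viaEmbedding e)} = Nat.card {ρ // AbsLE ρ v} := by
  symm
  refine Nat.card_congr (Equiv.ofBijective
    (fun ρ => ⟨ρ.1.viaEmbedding e, (absLE_viaEmbedding_iff e).mpr ρ.2⟩) ⟨fun ρ ρ' h => ?_, ?_⟩)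
  · exact Subtype.ext (viaEmbeddingHom_injective e (congrArg Subtype.val h))
  · rintro ⟨π, hπ⟩
    obtain ⟨ρ, rfl⟩ := exists_viaEmbedding_eq e fun z hz =>
      hπ.apply_eq_self (viaEmbedding_apply_of_notMem v e z hz)
    exact ⟨⟨ρ, (absLE_viaEmbedding_iff e).mp hπ⟩, rfl⟩

end Embedding

end Equiv.Perm

open Equiv.Perm

noncomputable def segmentCycle {N : ℕ} (k m : ℕ) (h : k + m ≤ N) : Perm (Fin N) :=
  (finRotate m).viaEmbedding ((Fin.natAddEmb k).trans (Fin.castLEEmb h))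

theorem segmentCycle_apply_val {N k m : ℕ} (h : k + m ≤ N) (z : Fin N) :
    (segmentCycle k m h z : ℕ) =
      if k ≤ z ∧ (z : ℕ) + 1 < k + m then (z : ℕ) + 1 else if k ≤ z ∧ (z : ℕ) < k + m then k
        else z := by
  by_cases hz : k ≤ z ∧ z < k + m
  · obtain ⟨m, rfl⟩ : ∃ m', m = m' + 1 := ⟨m - 1, by omega⟩
    have hz' : ((Fin.natAddEmb k).trans (Fin.castLEEmb h)) ⟨z - k, by omega⟩ = z := by
      ext; simp; omega
    rw [segmentCycle, ← hz', viaEmbedding_apply]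
    simp only [Function.Embedding.trans_apply, Fin.natAddEmb_apply, Fin.castLEEmb_apply,
      Fin.val_castLE, Fin.val_natAdd, coe_finRotate, Fin.ext_iff, Fin.val_last]
    split_ifs <;> omega
  · rw [segmentCycle, viaEmbedding_apply_of_notMem, if_neg (by omega), if_neg hz]
    rintro ⟨i, rfl⟩
    simp at hz

theorem fixCodim_finRotate (m : ℕ) : fixCodim (finRotate m) = m - 1 := by
  rcases m with _ | m
  · simp [← Perm.one_def]
  have hconst : ∀ f ∈ fixedFunctions (finRotate (m + 1)), ∀ i, f i = f 0 := by
    intro f hf i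
    induction i using Fin.induction with
    | zero => rfl
    | succ i ih => rw [← ih, ← hf i.castSucc, finRotate_apply, Fin.coeSucc_eq_succ]
  have hspan : fixedFunctions (finRotate (m + 1)) = ℚ ∙ 1 := by
    refine le_antisymm (fun f hf => Submodule.mem_span_singleton.mpr ⟨f 0, funext fun i => ?_⟩)
      ((Submodule.span_singleton_le_iff_mem _ _).mpr fun _ => rfl)
    simp [hconst f hf i]
  rw [fixCodim, hspan, finrank_span_singleton one_ne_zero, Fintype.card_fin]

theorem fixCodim_segmentCycle {N k m : ℕ} (h : k + m ≤ N) :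
    fixCodim (segmentCycle k m h) = m - 1 := by
  rw [segmentCycle, fixCodim_viaEmbedding, fixCodim_finRotate]

theorem disjoint_segmentCycle {N k₁ m₁ k₂ m₂ : ℕ} (h₁ : k₁ + m₁ ≤ N) (h₂ : k₂ + m₂ ≤ N)
    (h : k₁ + m₁ ≤ k₂) : Disjoint (segmentCycle k₁ m₁ h₁) (segmentCycle k₂ m₂ h₂) := by
  refine disjoint_iff_eq_or_eq.mpr fun z => ?_
  simp only [Fin.ext_iff, segmentCycle_apply_val]
  split_ifs <;> omega

/-- Splitting `(0 1 … n)` by `(j n)` and then removing `n` leaves `(0 … j-1)(j … n-1)`. -/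
theorem swap_mul_swap_mul_finRotate (n : ℕ) (j : Fin (n + 1)) :
    swap (Fin.last n) ((swap j (Fin.last n) * finRotate (n + 1)) (Fin.last n)) *
        (swap j (Fin.last n) * finRotate (n + 1)) =
      segmentCycle 0 j (by omega) * segmentCycle j (n - j) (by omega) := by
  ext z
  simp only [mul_apply, finRotate_last, segmentCycle_apply_val]
  simp only [swap_apply_def, apply_ite Fin.val, Fin.ext_iff, coe_finRotate, Fin.val_last,
    Fin.val_zero]
  have := z.isLt
  have := j.isLt
  split_ifs <;> first | contradiction | omega

theorem fixCodim_finRotate_eq_fixCodim_swap_mul_add_one {n : ℕ} {j : Fin (n + 1)}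
    (hj : j ≠ Fin.last n) :
    fixCodim (finRotate (n + 1)) = fixCodim (swap j (Fin.last n) * finRotate (n + 1)) + 1 := by
  set L := Fin.last n
  set C := swap j L * finRotate (n + 1)
  have hjn : (j : ℕ) < n := Fin.val_lt_last hj
  have hsplit := swap_mul_swap_mul_finRotate n j
  have hAB : fixCodim (swap L (C L) * C) = (j - 1) + (n - j - 1) := by
    rw [hsplit, (disjoint_segmentCycle _ _ (by omega)).fixCodim_mul, fixCodim_segmentCycle,
      fixCodim_segmentCycle]
  rw [fixCodim_finRotate, Nat.add_sub_cancel]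
  rcases Nat.eq_zero_or_pos j with hj0 | hj0
  · have hCL : C L = L := by
      rw [mul_apply, finRotate_last, show (0 : Fin (n + 1)) = j from Fin.ext hj0.symm,
        swap_apply_left]
    rw [hCL, swap_self, ← Perm.one_def, one_mul] at hAB
    omega
  · have h0j : (0 : Fin (n + 1)) ≠ j := Fin.ne_of_val_ne hj0.ne
    have h0L : (0 : Fin (n + 1)) ≠ L := Fin.ne_of_val_ne (by simp [L]; omega)
    have hCL : C L ≠ L := by
      rw [mul_apply, finRotate_last, swap_apply_of_ne_of_ne h0j h0L]
      exact h0L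
    have := fixCodim_swap_mul_of_apply_eq (σ := swap L (C L) * C) (by simp [swap_apply_right]) hCL
    rw [swap_mul_self_mul] at this
    omega

noncomputable def cycleIntervalCard (m : ℕ) : ℕ :=
  Nat.card {π : Perm (Fin m) // AbsLE π (finRotate m)}

theorem card_absLE_segmentCycle {N k m : ℕ} (h : k + m ≤ N) :
    Nat.card {π // AbsLE π (segmentCycle k m h)} = cycleIntervalCard m :=
  card_absLE_viaEmbedding _ _

theorem card_absLE_finRotate_and_apply_last (n : ℕ) (j : Fin (n + 1)) :
    Nat.card {π // AbsLE π (finRotate (n + 1)) ∧ π (Fin.last n) = j} =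
      cycleIntervalCard j * cycleIntervalCard (n - j) := by
  have hfiber : Nat.card {π // AbsLE π (finRotate (n + 1)) ∧ π (Fin.last n) = j} =
      Nat.card {π // AbsLE π (swap j (Fin.last n) * finRotate (n + 1)) ∧
        π (Fin.last n) = Fin.last n} := by
    rcases eq_or_ne j (Fin.last n) with rfl | hj
    · rw [swap_self, ← Perm.one_def, one_mul]
    · exact card_absLE_and_apply_eq hj (fixCodim_finRotate_eq_fixCodim_swap_mul_add_one hj)
  rw [hfiber, card_absLE_and_apply_eq_self, swap_mul_swap_mul_finRotate,
    (disjoint_segmentCycle _ _ (by omega)).card_absLE_mul, card_absLE_segmentCycle,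
    card_absLE_segmentCycle]

theorem cycleIntervalCard_zero : cycleIntervalCard 0 = 1 :=
  Nat.card_eq_one_iff_exists.mpr ⟨⟨1, one_absLE _⟩, fun _ => Subtype.ext (Subsingleton.elim _ _)⟩

theorem cycleIntervalCard_succ (n : ℕ) :
    cycleIntervalCard (n + 1) =
      ∑ j : Fin (n + 1), cycleIntervalCard j * cycleIntervalCard (n - j) := by
  rw [cycleIntervalCard, ← Nat.card_congr (Equiv.sigmaFiberEquiv
    fun π : {π // AbsLE π (finRotate (n + 1))} => π.1 (Fin.last n)), Nat.card_sigma]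
  refine Finset.sum_congr rfl fun j _ => ?_
  rw [← card_absLE_finRotate_and_apply_last]
  exact Nat.card_congr (Equiv.subtypeSubtypeEquivSubtypeInter (AbsLE · (finRotate (n + 1)))
    (· (Fin.last n) = j))

/-- The interval `[1, w]` in absolute order on `S_n`, `w = (1 2 ... n)`, has cardinality
the Catalan number `C_n`. -/
theorem card_interval_eq_catalan (n : ℕ) :
    Nat.card {π : Perm (Fin n) // absLe π (finRotate n)} = catalan n := by
  change cycleIntervalCard n = catalan n
  induction n using Nat.strong_induction_on with
  | _ n ih =>
    cases n with
    | zero => rw [cycleIntervalCard_zero, catalan_zero]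
    | succ n =>
      rw [cycleIntervalCard_succ, catalan_succ]
      exact Finset.sum_congr rfl fun j _ => by rw [ih j (by omega), ih (n - j) (by omega)]
end

section
/- The noncrossing partition lattice NC(S_n, w) for w = (1 2 ... n) is a lattice: every pair of elements has a least upper bound and a greatest lower bound. -/
open Equiv

/-!
Reflection length is `n` minus the number of cycles, since multiplying by a transposition splits
one cycle or merges two. Hence `x ≤ y` forces the cycles of `x` to refine those of `y`. Splitting
cycles one transposition at a time shows that the permutations below the long cycle `w` are exactly
those sending each point to the next point of its block, in the cyclic order, for a noncrossing
partition, and that on them the absolute order is refinement of partitions. So the meet of `u` and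
`v` comes from the common refinement of their cycle partitions, which is again noncrossing. Joins
come from meets through the Kreweras complement `x ↦ x⁻¹ * w`, an order-reversing bijection of
`[1, w]`.
-/

section WordLength

variable {G : Type*} [Group G] {R : Set G}

theorem wordLen_le_length {l : List G} (hl : ∀ x ∈ l, x ∈ R) : wordLen R l.prod ≤ l.length :=
  Nat.sInf_le ⟨l, hl, rfl, rfl⟩

theorem exists_list_length_eq_wordLen (hR : Submonoid.closure R = ⊤) (g : G) :
    ∃ l : List G, (∀ x ∈ l, x ∈ R) ∧ l.length = wordLen R g ∧ l.prod = g := by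
  obtain ⟨l, hl, rfl⟩ := Submonoid.exists_list_of_mem_closure (hR ▸ Submonoid.mem_top g)
  exact Nat.sInf_mem
    (s := {k | ∃ l' : List G, (∀ x ∈ l', x ∈ R) ∧ l'.length = k ∧ l'.prod = l.prod})
    ⟨l.length, l, hl, rfl, rfl⟩

theorem wordLen_one : wordLen R (1 : G) = 0 :=
  Nat.le_zero.mp (by simpa using wordLen_le_length (R := R) (l := []) (by simp))

theorem wordLen_eq_zero_iff (hR : Submonoid.closure R = ⊤) {g : G} : wordLen R g = 0 ↔ g = 1 := by
  refine ⟨fun h => ?_, fun h => h ▸ wordLen_one⟩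
  obtain ⟨l, -, hlen, rfl⟩ := exists_list_length_eq_wordLen hR g
  simp [List.length_eq_zero_iff.mp (hlen.trans h)]

theorem wordLen_mul_le (hR : Submonoid.closure R = ⊤) (g h : G) :
    wordLen R (g * h) ≤ wordLen R g + wordLen R h := by
  obtain ⟨l₁, hl₁, hlen₁, rfl⟩ := exists_list_length_eq_wordLen hR g
  obtain ⟨l₂, hl₂, hlen₂, rfl⟩ := exists_list_length_eq_wordLen hR h
  rw [← hlen₁, ← hlen₂, ← List.length_append, ← List.prod_append]
  exact wordLen_le_length fun x hx => (List.mem_append.mp hx).elim (hl₁ x) (hl₂ x)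

theorem wordLen_conj_le (hR : Submonoid.closure R = ⊤) {g : G} (hconj : ∀ x ∈ R, g * x * g⁻¹ ∈ R)
    (h : G) : wordLen R (g * h * g⁻¹) ≤ wordLen R h := by
  obtain ⟨l, hl, hlen, rfl⟩ := exists_list_length_eq_wordLen hR h
  rw [← hlen, ← MulAut.conj_apply, map_list_prod, ← List.length_map (f := MulAut.conj g)]
  exact wordLen_le_length (by simpa using fun x hx => hconj x (hl x hx))

theorem wordLen_conj (hR : Submonoid.closure R = ⊤) (hconj : ∀ g, ∀ x ∈ R, g * x * g⁻¹ ∈ R)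
    (g h : G) : wordLen R (g * h * g⁻¹) = wordLen R h := by
  refine (wordLen_conj_le hR (hconj g) h).antisymm ?_
  simpa [mul_assoc] using wordLen_conj_le hR (hconj g⁻¹) (g * h * g⁻¹)

end WordLength

theorem Nat.card_eq_card_add_one_of_surjective {A B : Type*} [Finite A] {g : A → B}
    (hg : Function.Surjective g) {a₀ b₀ : A} (hne : a₀ ≠ b₀) (heq : g a₀ = g b₀)
    (hinj : ∀ x y, x ≠ b₀ → y ≠ b₀ → g x = g y → x = y) : Nat.card A = Nat.card B + 1 := by
  classical
  have e : {x // x ≠ b₀} ≃ B := by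
    refine Equiv.ofBijective (fun x => g x) ⟨fun x y h => Subtype.ext (hinj _ _ x.2 y.2 h), ?_⟩
    intro c
    obtain ⟨x, rfl⟩ := hg c
    by_cases hx : x = b₀
    · exact ⟨⟨a₀, hne⟩, hx ▸ heq⟩
    · exact ⟨⟨x, hx⟩, rfl⟩
  rw [← Nat.card_congr (Equiv.optionSubtypeNe b₀), Finite.card_option, Nat.card_congr e]

namespace Equiv.Perm

variable {α : Type*} {σ : Perm α}

theorem IsSwap.conj [DecidableEq α] {τ : Perm α} (g : Perm α) (h : τ.IsSwap) :
    (g * τ * g⁻¹).IsSwap := by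
  obtain ⟨x, y, hxy, rfl⟩ := h
  exact ⟨g x, g y, g.injective.ne hxy, (swap_apply_apply g x y).symm⟩

theorem SameCycle.of_pow_apply_eq {a b : α} {k : ℕ} (h : (σ ^ k) a = b) : σ.SameCycle a b :=
  h ▸ sameCycle_pow_right.mpr (SameCycle.refl σ a)

theorem SameCycle.rel_of_forall_rel_apply [Finite α] {r : α → α → Prop} (hr : Equivalence r)
    (h : ∀ x, r x (σ x)) {x y : α} (hxy : σ.SameCycle x y) : r x y := by
  obtain ⟨i, rfl⟩ := hxy.exists_nat_pow_eq
  clear hxy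
  induction i with
  | zero => exact hr.refl x
  | succ i ih => exact hr.trans ih (by rw [pow_succ', mul_apply]; exact h _)

theorem SameCycle.exists_pow_lt_of_pow_apply_eq_self [Finite α] {a c : α} {k : ℕ} (hk : 0 < k)
    (hper : (σ ^ k) a = a) (h : σ.SameCycle a c) : ∃ j < k, (σ ^ j) a = c := by
  obtain ⟨i, rfl⟩ := h.exists_nat_pow_eq
  refine ⟨i % k, Nat.mod_lt i hk, ?_⟩
  conv_rhs => rw [← Nat.mod_add_div i k, pow_add, pow_mul, mul_apply,
    pow_apply_eq_self_of_apply_eq_self hper]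

section SwapMul

variable [DecidableEq α] {a b : α} {k : ℕ}

theorem swap_mul_pow_apply_of_lt (h : ∀ j, 0 < j → j < k → (σ ^ j) a ≠ a ∧ (σ ^ j) a ≠ b)
    {j : ℕ} (hj : j < k) : ((swap a b * σ) ^ j) a = (σ ^ j) a := by
  induction j with
  | zero => rfl
  | succ j ih =>
    obtain ⟨ha, hb⟩ := h (j + 1) j.succ_pos hj
    rw [pow_succ', mul_apply, ih (by omega), mul_apply, ← mul_apply σ, ← pow_succ',
      swap_apply_of_ne_of_ne ha hb]

theorem swap_mul_pow_apply_eq_swap (h : ∀ j, 0 < j → j < k → (σ ^ j) a ≠ a ∧ (σ ^ j) a ≠ b)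
    (hk : 0 < k) : ((swap a b * σ) ^ k) a = swap a b ((σ ^ k) a) := by
  obtain ⟨j, rfl⟩ : ∃ j, k = j + 1 := ⟨k - 1, by omega⟩
  rw [pow_succ', mul_apply, swap_mul_pow_apply_of_lt h (lt_add_one j), mul_apply, ← mul_apply σ,
    ← pow_succ']

theorem sameCycle_swap_mul_iff [Finite α] (hab : a ≠ b) :
    (swap a b * σ).SameCycle a b ↔ ¬σ.SameCycle a b := by
  classical
  -- At the first time `k` the `σ`-orbit of `a` meets `{a, b}`, the orbit of `a` under
  -- `swap a b * σ` meets the other point; whichever of the two orbits returns to `a` misses `b`.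
  have hex : ∃ k, 0 < k ∧ ((σ ^ k) a = a ∨ (σ ^ k) a = b) :=
    ⟨orderOf σ, orderOf_pos σ, Or.inl (by rw [pow_orderOf_eq_one]; rfl)⟩
  obtain ⟨hk, hhit⟩ := Nat.find_spec hex
  have hmin : ∀ j, 0 < j → j < Nat.find hex → (σ ^ j) a ≠ a ∧ (σ ^ j) a ≠ b :=
    fun j hj hjk => not_or.mp fun h => Nat.find_min hex hjk ⟨hj, h⟩
  have hne_b : ∀ j < Nat.find hex, (σ ^ j) a ≠ b := fun j hj => by
    rcases j.eq_zero_or_pos with rfl | hj0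
    · exact hab
    · exact (hmin j hj0 hj).2
  have hswap := swap_mul_pow_apply_eq_swap hmin hk
  rcases hhit with hret | hhit
  · rw [hret, swap_apply_left] at hswap
    refine ⟨fun _ hσ => ?_, fun _ => SameCycle.of_pow_apply_eq hswap⟩
    obtain ⟨j, hj, hjb⟩ := hσ.exists_pow_lt_of_pow_apply_eq_self hk hret
    exact hne_b j hj hjb
  · rw [hhit, swap_apply_right] at hswap
    refine ⟨fun hσ' => ?_, fun hσ => absurd (SameCycle.of_pow_apply_eq hhit) hσ⟩
    obtain ⟨j, hj, hjb⟩ := hσ'.exists_pow_lt_of_pow_apply_eq_self hk hswap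
    exact (hne_b j hj (swap_mul_pow_apply_of_lt hmin hj ▸ hjb)).elim

end SwapMul

def SameCycleMerge (σ : Perm α) (a b x y : α) : Prop :=
  σ.SameCycle x y ∨ (σ.SameCycle x a ∧ σ.SameCycle y b) ∨ (σ.SameCycle x b ∧ σ.SameCycle y a)

theorem sameCycleMerge_equivalence (σ : Perm α) (a b : α) : Equivalence (σ.SameCycleMerge a b) where
  refl x := Or.inl (SameCycle.refl σ x)
  symm := by
    rintro x y (h | ⟨h₁, h₂⟩ | ⟨h₁, h₂⟩)
    exacts [Or.inl h.symm, Or.inr (Or.inr ⟨h₂, h₁⟩), Or.inr (Or.inl ⟨h₂, h₁⟩)]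
  trans := by
    rintro x y z (h | ⟨h₁, h₂⟩ | ⟨h₁, h₂⟩) (h' | ⟨h₁', h₂'⟩ | ⟨h₁', h₂'⟩)
    exacts [Or.inl (h.trans h'), Or.inr (Or.inl ⟨h.trans h₁', h₂'⟩),
      Or.inr (Or.inr ⟨h.trans h₁', h₂'⟩), Or.inr (Or.inl ⟨h₁, h'.symm.trans h₂⟩),
      Or.inl (h₁.trans (h₁'.symm.trans (h₂.trans h₂'.symm))), Or.inl (h₁.trans h₂'.symm),
      Or.inr (Or.inr ⟨h₁, h'.symm.trans h₂⟩), Or.inl (h₁.trans h₂'.symm),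
      Or.inl (h₁.trans (h₁'.symm.trans (h₂.trans h₂'.symm)))]

theorem SameCycleMerge.sameCycle {a b x y : α} (hab : σ.SameCycle a b)
    (h : σ.SameCycleMerge a b x y) : σ.SameCycle x y := by
  rcases h with h | ⟨h₁, h₂⟩ | ⟨h₁, h₂⟩
  exacts [h, (h₁.trans hab).trans h₂.symm, (h₁.trans hab.symm).trans h₂.symm]

theorem SameCycle.sameCycleMerge_of_swap_mul [Finite α] [DecidableEq α] {a b x y : α}
    (h : (swap a b * σ).SameCycle x y) : σ.SameCycleMerge a b x y := by
  refine h.rel_of_forall_rel_apply (sameCycleMerge_equivalence σ a b) fun z => ?_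
  rw [mul_apply]
  by_cases ha : σ z = a
  · rw [ha, swap_apply_left]
    exact Or.inr (Or.inl ⟨ha ▸ (SameCycle.refl σ z).apply_right, .refl σ b⟩)
  by_cases hb : σ z = b
  · rw [hb, swap_apply_right]
    exact Or.inr (Or.inr ⟨hb ▸ (SameCycle.refl σ z).apply_right, .refl σ a⟩)
  rw [swap_apply_of_ne_of_ne ha hb]
  exact Or.inl (SameCycle.refl σ z).apply_right

/-- Fixed points count as cycles, unlike in `cycleType`. -/
noncomputable def numCycles (σ : Perm α) : ℕ :=
  Nat.card (Quotient (SameCycle.setoid σ))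

theorem numCycles_le_card [Finite α] (σ : Perm α) : σ.numCycles ≤ Nat.card α :=
  Nat.card_le_card_of_surjective _ Quotient.mk_surjective

theorem numCycles_one : (1 : Perm α).numCycles = Nat.card α :=
  (Nat.card_congr (Equiv.ofBijective _
    ⟨fun _ _ h => sameCycle_one.mp (Quotient.exact h), Quotient.mk_surjective⟩)).symm

section SwapMul

variable [Finite α] [DecidableEq α] {a b : α}

theorem numCycles_swap_mul_of_sameCycle (hab : a ≠ b) (h : σ.SameCycle a b) :
    (swap a b * σ).numCycles = σ.numCycles + 1 := by
  -- Mapping each cycle of `swap a b * σ` to the cycle of `σ` containing it glues exactly the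
  -- cycles of `a` and `b`.
  have hsplit : ¬(swap a b * σ).SameCycle a b := fun h' => (sameCycle_swap_mul_iff hab).mp h' h
  have hmerge : ∀ x y, σ.SameCycle x y → (swap a b * σ).SameCycleMerge a b x y := fun x y hxy =>
    SameCycle.sameCycleMerge_of_swap_mul (by rwa [swap_mul_self_mul])
  refine Nat.card_eq_card_add_one_of_surjective (a₀ := ⟦a⟧) (b₀ := ⟦b⟧)
    (g := Quotient.map' id fun x y hxy => (SameCycle.sameCycleMerge_of_swap_mul hxy).sameCycle h)
    (Quotient.ind fun x => ⟨⟦x⟧, rfl⟩) (fun h' => hsplit (Quotient.exact h')) (Quotient.sound h) ?_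
  rintro ⟨x⟩ ⟨y⟩ hx hy hxy
  rcases hmerge x y (Quotient.exact hxy) with h' | ⟨-, h'⟩ | ⟨h', -⟩
  exacts [Quotient.sound h', (hy (Quotient.sound h')).elim, (hx (Quotient.sound h')).elim]

theorem numCycles_swap_mul_of_not_sameCycle (hab : a ≠ b) (h : ¬σ.SameCycle a b) :
    σ.numCycles = (swap a b * σ).numCycles + 1 := by
  simpa using numCycles_swap_mul_of_sameCycle hab ((sameCycle_swap_mul_iff (σ := σ) hab).mpr h)

theorem numCycles_le_numCycles_swap_mul_add_one (σ : Perm α) (a b : α) :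
    σ.numCycles ≤ (swap a b * σ).numCycles + 1 := by
  by_cases hab : a = b
  · simp [hab, swap_self, ← Perm.one_def]
  by_cases h : σ.SameCycle a b
  · rw [numCycles_swap_mul_of_sameCycle hab h]; omega
  · rw [numCycles_swap_mul_of_not_sameCycle hab h]

theorem SameCycle.swap_mul_of_numCycles_eq (hnum : σ.numCycles = (swap a b * σ).numCycles + 1)
    {x y : α} (h : σ.SameCycle x y) : (swap a b * σ).SameCycle x y := by
  have hab : a ≠ b := by rintro rfl; simp [swap_self, ← Perm.one_def] at hnum
  have hmerged : (swap a b * σ).SameCycle a b := by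
    refine (sameCycle_swap_mul_iff hab).mpr fun h' => ?_
    rw [numCycles_swap_mul_of_sameCycle hab h'] at hnum
    omega
  exact (SameCycle.sameCycleMerge_of_swap_mul (by rwa [swap_mul_self_mul])).sameCycle hmerged

end SwapMul

section SwapList

variable [Finite α] [DecidableEq α]

theorem numCycles_le_numCycles_list_prod_mul_add_length {l : List (Perm α)}
    (hl : ∀ τ ∈ l, τ.IsSwap) (σ : Perm α) : σ.numCycles ≤ (l.prod * σ).numCycles + l.length := by
  induction l with
  | nil => simp
  | cons τ l ih =>
    obtain ⟨a, b, -, rfl⟩ := hl τ List.mem_cons_self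
    have := numCycles_le_numCycles_swap_mul_add_one (l.prod * σ) a b
    have := ih fun τ hτ => hl τ (List.mem_cons_of_mem _ hτ)
    rw [List.prod_cons, mul_assoc, List.length_cons]
    omega

theorem SameCycle.list_prod_mul_of_numCycles_eq {l : List (Perm α)} (hl : ∀ τ ∈ l, τ.IsSwap)
    (hnum : σ.numCycles = (l.prod * σ).numCycles + l.length) {x y : α} (h : σ.SameCycle x y) :
    (l.prod * σ).SameCycle x y := by
  induction l with
  | nil => simpa using h
  | cons τ l ih =>
    obtain ⟨a, b, -, rfl⟩ := hl τ List.mem_cons_self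
    have hl' : ∀ τ ∈ l, τ.IsSwap := fun τ hτ => hl τ (List.mem_cons_of_mem _ hτ)
    have h₁ := numCycles_le_numCycles_swap_mul_add_one (l.prod * σ) a b
    have h₂ := numCycles_le_numCycles_list_prod_mul_add_length hl' σ
    rw [List.prod_cons, mul_assoc, List.length_cons] at hnum
    rw [List.prod_cons, mul_assoc]
    exact SameCycle.swap_mul_of_numCycles_eq (by omega) (ih hl' (by omega))

end SwapList

end Equiv.Perm

open Equiv.Perm Fin.NatCast

section ReflectionLength

variable {n : ℕ}

theorem reflLen_le_length {l : List (Perm (Fin n))} (hl : ∀ τ ∈ l, τ.IsSwap) :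
    reflLen l.prod ≤ l.length :=
  wordLen_le_length hl

theorem exists_isSwap_list_length_eq_reflLen (σ : Perm (Fin n)) :
    ∃ l : List (Perm (Fin n)), (∀ τ ∈ l, τ.IsSwap) ∧ l.length = reflLen σ ∧ l.prod = σ :=
  exists_list_length_eq_wordLen mclosure_isSwap σ

theorem reflLen_one : reflLen (1 : Perm (Fin n)) = 0 :=
  wordLen_one

theorem reflLen_eq_zero_iff {σ : Perm (Fin n)} : reflLen σ = 0 ↔ σ = 1 :=
  wordLen_eq_zero_iff mclosure_isSwap

theorem reflLen_mul_le (σ τ : Perm (Fin n)) : reflLen (σ * τ) ≤ reflLen σ + reflLen τ :=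
  wordLen_mul_le mclosure_isSwap σ τ

theorem reflLen_conj (g σ : Perm (Fin n)) : reflLen (g * σ * g⁻¹) = reflLen σ :=
  wordLen_conj mclosure_isSwap (fun g _ h => h.conj g) g σ

theorem reflLen_swap {a b : Fin n} (hab : a ≠ b) : reflLen (swap a b) = 1 := by
  have hle : reflLen (swap a b) ≤ 1 := by
    simpa using reflLen_le_length (l := [swap a b]) (by simpa using ⟨a, b, hab, rfl⟩)
  have hne : reflLen (swap a b) ≠ 0 := by rwa [Ne, reflLen_eq_zero_iff, swap_eq_one_iff]
  omega

theorem card_le_reflLen_add_numCycles (σ : Perm (Fin n)) : n ≤ reflLen σ + σ.numCycles := by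
  obtain ⟨l, hl, hlen, rfl⟩ := exists_isSwap_list_length_eq_reflLen σ
  have := numCycles_le_numCycles_list_prod_mul_add_length hl 1
  rw [numCycles_one, Nat.card_eq_fintype_card, Fintype.card_fin, mul_one] at this
  omega

theorem reflLen_add_numCycles_le (σ : Perm (Fin n)) : reflLen σ + σ.numCycles ≤ n := by
  induction hk : n - σ.numCycles using Nat.strong_induction_on generalizing σ with
  | _ k ih =>
  by_cases hσ : σ = 1
  · simp [hσ, reflLen_one, numCycles_one]
  obtain ⟨a, ha⟩ : ∃ a, σ a ≠ a := not_forall.mp fun h => hσ (Equiv.ext h)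
  have hsplit := numCycles_swap_mul_of_sameCycle (Ne.symm ha)
    (SameCycle.refl σ a).apply_right
  have hcard := numCycles_le_card (swap a (σ a) * σ)
  rw [Nat.card_eq_fintype_card, Fintype.card_fin] at hcard
  have hih := ih _ (by omega) (swap a (σ a) * σ) rfl
  have hmul := reflLen_mul_le (swap a (σ a)) (swap a (σ a) * σ)
  rw [swap_mul_self_mul, reflLen_swap (Ne.symm ha)] at hmul
  omega

theorem reflLen_add_numCycles (σ : Perm (Fin n)) : reflLen σ + σ.numCycles = n :=
  (reflLen_add_numCycles_le σ).antisymm (card_le_reflLen_add_numCycles σ)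

theorem reflLen_mul_swap_add_one {y : Perm (Fin n)} {a b : Fin n} (hab : a ≠ b)
    (h : y.SameCycle a b) : reflLen (y * swap a b) + 1 = reflLen y := by
  have hnum := numCycles_swap_mul_of_sameCycle (y.injective.ne hab)
    (sameCycle_apply_left.mpr (sameCycle_apply_right.mpr h))
  rw [swap_apply_apply, inv_mul_cancel_right] at hnum
  have := reflLen_add_numCycles y
  have := reflLen_add_numCycles (y * swap a b)
  omega

theorem Equiv.Perm.SameCycle.of_reflLen_mul_swap_lt {y : Perm (Fin n)} {a b : Fin n}
    (h : reflLen (y * swap a b) < reflLen y) : y.SameCycle a b := by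
  have hab : a ≠ b := by rintro rfl; simp [swap_self, ← Perm.one_def] at h
  by_contra hn
  have hnum := numCycles_swap_mul_of_not_sameCycle (y.injective.ne hab)
    (fun h' => hn (sameCycle_apply_left.mp (sameCycle_apply_right.mp h')))
  rw [swap_apply_apply, inv_mul_cancel_right] at hnum
  have := reflLen_add_numCycles y
  have := reflLen_add_numCycles (y * swap a b)
  omega

end ReflectionLength

section AbsoluteOrder

variable {n : ℕ} {x y z w : Perm (Fin n)}

theorem absLe_refl (x : Perm (Fin n)) : absLe x x := by
  simp [absLe, reflLen_one]

theorem reflLen_le_of_absLe (h : absLe x y) : reflLen x ≤ reflLen y :=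
  h ▸ Nat.le_add_right _ _

theorem absLe_trans (hxy : absLe x y) (hyz : absLe y z) : absLe x z := by
  have h₁ : reflLen z ≤ reflLen x + reflLen (x⁻¹ * z) := by
    simpa using reflLen_mul_le x (x⁻¹ * z)
  have h₂ : reflLen (x⁻¹ * z) ≤ reflLen (x⁻¹ * y) + reflLen (y⁻¹ * z) := by
    simpa [mul_assoc] using reflLen_mul_le (x⁻¹ * y) (y⁻¹ * z)
  unfold absLe at *
  omega

theorem Equiv.Perm.SameCycle.of_absLe (h : absLe x y) {p q : Fin n} (hpq : x.SameCycle p q) :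
    y.SameCycle p q := by
  obtain ⟨l, hl, hlen, hprod⟩ := exists_isSwap_list_length_eq_reflLen (y * x⁻¹)
  have hy : l.prod * x = y := by rw [hprod, inv_mul_cancel_right]
  have hconj : reflLen (y * x⁻¹) = reflLen (x⁻¹ * y) := by
    rw [← reflLen_conj x⁻¹ (y * x⁻¹)]; group
  have := reflLen_add_numCycles x
  have := reflLen_add_numCycles y
  unfold absLe at h
  rw [← hy]
  exact hpq.list_prod_mul_of_numCycles_eq hl (by rw [hy]; omega)

theorem absLe_mul_swap {a b : Fin n} (hab : a ≠ b) (h : y.SameCycle a b) :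
    absLe (y * swap a b) y := by
  have := reflLen_mul_swap_add_one hab h
  rw [absLe, mul_inv_rev, swap_inv, mul_assoc, inv_mul_cancel, mul_one, reflLen_swap hab]
  omega

theorem exists_mul_swap_absLe (h : absLe x y) (hne : x ≠ y) :
    ∃ a b : Fin n, absLe (x * swap a b) y ∧ reflLen x < reflLen (x * swap a b) := by
  obtain ⟨_ | ⟨t, l⟩, hl, hlen, hprod⟩ := exists_isSwap_list_length_eq_reflLen (x⁻¹ * y)
  · exact (hne (inv_mul_eq_one.mp hprod.symm)).elim
  obtain ⟨a, b, hab, rfl⟩ := hl t List.mem_cons_self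
  have hrest : (x * swap a b)⁻¹ * y = l.prod := by
    rw [mul_inv_rev, swap_inv, mul_assoc, ← hprod, List.prod_cons, swap_mul_self_mul]
  have hl : reflLen l.prod ≤ l.length :=
    reflLen_le_length fun τ hτ => hl τ (List.mem_cons_of_mem _ hτ)
  have h₁ : reflLen y ≤ reflLen (x * swap a b) + reflLen l.prod := by
    have := reflLen_mul_le (x * swap a b) ((x * swap a b)⁻¹ * y)
    rwa [mul_inv_cancel_left, hrest] at this
  have h₂ : reflLen (x * swap a b) ≤ reflLen x + 1 := by
    simpa [reflLen_swap hab] using reflLen_mul_le x (swap a b)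
  rw [absLe, ← hlen, List.length_cons] at h
  refine ⟨a, b, ?_, by omega⟩
  rw [absLe, hrest]
  omega

theorem absLe_inv_mul_iff : absLe (x⁻¹ * w) w ↔ absLe x w := by
  rw [absLe, absLe, show (x⁻¹ * w)⁻¹ * w = w⁻¹ * x * w⁻¹⁻¹ by group, reflLen_conj, add_comm]

theorem absLe_inv_mul_inv_mul_iff (hx : absLe x w) (hy : absLe y w) :
    absLe (y⁻¹ * w) (x⁻¹ * w) ↔ absLe x y := by
  rw [absLe, absLe, show (y⁻¹ * w)⁻¹ * (x⁻¹ * w) = w⁻¹ * x * (x⁻¹ * y) * (w⁻¹ * x)⁻¹ by group,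
    reflLen_conj]
  unfold absLe at hx hy
  omega

theorem exists_join_of_exists_meet
    (hmeet : ∀ u v : Perm (Fin n), absLe u w → absLe v w → ∃ m, absLe m w ∧ absLe m u ∧
      absLe m v ∧ ∀ z, absLe z w → absLe z u → absLe z v → absLe z m)
    {u v : Perm (Fin n)} (hu : absLe u w) (hv : absLe v w) :
    ∃ m, absLe m w ∧ absLe u m ∧ absLe v m ∧
      ∀ z, absLe z w → absLe u z → absLe v z → absLe m z := by
  obtain ⟨m, hmw, hmu, hmv, hmax⟩ :=
    hmeet _ _ (absLe_inv_mul_iff.mpr hu) (absLe_inv_mul_iff.mpr hv)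
  have hK : (w * m⁻¹)⁻¹ * w = m := by group
  have hm : absLe (w * m⁻¹) w := absLe_inv_mul_iff.mp (by rwa [hK])
  refine ⟨w * m⁻¹, hm, ?_, ?_, fun z hz huz hvz => ?_⟩
  · rwa [← absLe_inv_mul_inv_mul_iff hu hm, hK]
  · rwa [← absLe_inv_mul_inv_mul_iff hv hm, hK]
  · rw [← absLe_inv_mul_inv_mul_iff hm hz, hK]
    exact hmax _ (absLe_inv_mul_iff.mpr hz) ((absLe_inv_mul_inv_mul_iff hu hz).mpr huz)
      ((absLe_inv_mul_inv_mul_iff hv hz).mpr hvz)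

end AbsoluteOrder

theorem Nat.mod_eq_or_mod_eq_sub_of_lt_two_mul {m n : ℕ} (h : m < 2 * n) :
    (m % n = m ∧ m < n) ∨ (m % n = m - n ∧ n ≤ m) := by
  rcases Nat.lt_or_ge m n with hm | hm
  · exact Or.inl ⟨Nat.mod_eq_of_lt hm, hm⟩
  · exact Or.inr ⟨by rw [Nat.mod_eq_sub_mod hm, Nat.mod_eq_of_lt (by omega)], hm⟩

section CyclicOrder

/-- The number of steps of the long cycle `i ↦ i + 1` leading from `i` to `j`. -/
def fwdDist {n : ℕ} (i j : Fin n) : ℕ := ((j - i : Fin n) : ℕ)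

theorem fwdDist_lt {n : ℕ} (i j : Fin n) : fwdDist i j < n := (j - i).isLt

variable {n : ℕ} [NeZero n]

theorem add_fwdDist (i j : Fin n) : i + (fwdDist i j : Fin n) = j := by
  simp [fwdDist]

theorem fwdDist_add_natCast (i : Fin n) (k : ℕ) : fwdDist i (i + (k : Fin n)) = k % n := by
  simp [fwdDist, Fin.val_natCast]

theorem fwdDist_eq_zero_iff {i j : Fin n} : fwdDist i j = 0 ↔ i = j := by
  rw [fwdDist, Fin.val_eq_zero_iff, sub_eq_zero, eq_comm]

theorem fwdDist_self (i : Fin n) : fwdDist i i = 0 := fwdDist_eq_zero_iff.mpr rfl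

theorem fwdDist_pos {i j : Fin n} (h : i ≠ j) : 0 < fwdDist i j :=
  Nat.pos_of_ne_zero (mt fwdDist_eq_zero_iff.mp h)

theorem add_natCast_add_natCast (i : Fin n) (j k : ℕ) :
    i + (j : Fin n) + (k : Fin n) = i + ((j + k : ℕ) : Fin n) := by
  rw [Nat.cast_add, add_assoc]

theorem add_natCast_self (i : Fin n) : i + (n : Fin n) = i := by
  simp

theorem add_natCast_inj {i : Fin n} {j k : ℕ} :
    i + (j : Fin n) = i + (k : Fin n) ↔ j % n = k % n := by
  rw [add_right_inj, Fin.ext_iff, Fin.val_natCast, Fin.val_natCast]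

theorem fwdDist_add_fwdDist {i j : Fin n} (h : i ≠ j) : fwdDist i j + fwdDist j i = n := by
  have := fwdDist_lt i j
  have := fwdDist_lt j i
  have := fwdDist_pos h
  have key : i + ((fwdDist i j + fwdDist j i : ℕ) : Fin n) = i + ((0 : ℕ) : Fin n) := by
    rw [← add_natCast_add_natCast, add_fwdDist, add_fwdDist, Nat.cast_zero, add_zero]
  rw [add_natCast_inj, Nat.zero_mod] at key
  rcases Nat.mod_eq_or_mod_eq_sub_of_lt_two_mul (m := fwdDist i j + fwdDist j i)
    (show _ < 2 * n by omega) with h' | h' <;> omega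

theorem fwdDist_add_natCast_of_lt (i : Fin n) {k : ℕ} (hk : k < n) :
    fwdDist i (i + (k : Fin n)) = k := by
  rw [fwdDist_add_natCast, Nat.mod_eq_of_lt hk]

theorem fwdDist_add_natCast' (a z : Fin n) (k : ℕ) :
    fwdDist a (z + (k : Fin n)) = (fwdDist a z + k) % n := by
  rw [← fwdDist_add_natCast a, ← add_natCast_add_natCast, add_fwdDist]

end CyclicOrder

section NextPerm

variable {n : ℕ} [NeZero n] (s : Setoid (Fin n))

theorem exists_rel_add_natCast (i : Fin n) : ∃ k : ℕ, 0 < k ∧ s (i + (k : Fin n)) i :=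
  ⟨n, NeZero.pos n, by rw [add_natCast_self]⟩

open Classical in
noncomputable def nextStep (i : Fin n) : ℕ := Nat.find (exists_rel_add_natCast s i)

variable {s}

theorem nextStep_pos (i : Fin n) : 0 < nextStep s i := by
  classical exact (Nat.find_spec (exists_rel_add_natCast s i)).1

theorem rel_add_nextStep (i : Fin n) : s (i + (nextStep s i : Fin n)) i := by
  classical exact (Nat.find_spec (exists_rel_add_natCast s i)).2

theorem nextStep_le {i : Fin n} {k : ℕ} (hk : 0 < k) (h : s (i + (k : Fin n)) i) :
    nextStep s i ≤ k := by
  classical exact Nat.find_min' _ ⟨hk, h⟩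

theorem nextStep_le_card (i : Fin n) : nextStep s i ≤ n :=
  nextStep_le (NeZero.pos n) (by rw [add_natCast_self])

theorem not_rel_of_lt_nextStep {i : Fin n} {j : ℕ} (hj : 0 < j) (hjk : j < nextStep s i) :
    ¬s (i + (j : Fin n)) i := by
  classical exact fun h => Nat.find_min _ hjk ⟨hj, h⟩

theorem nextStep_eq {i : Fin n} {k : ℕ} (hk : 0 < k) (hrel : s (i + (k : Fin n)) i)
    (hmin : ∀ j, 0 < j → j < k → ¬s (i + (j : Fin n)) i) : nextStep s i = k :=
  (nextStep_le hk hrel).antisymm <| not_lt.mp fun hlt =>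
    hmin _ (nextStep_pos i) hlt (rel_add_nextStep i)

theorem nextStep_le_fwdDist {a b : Fin n} (h : s a b) (hab : a ≠ b) :
    nextStep s a ≤ fwdDist a b :=
  nextStep_le (fwdDist_pos hab) (by rw [add_fwdDist]; exact s.symm' h)

theorem nextStep_injective :
    Function.Injective fun i : Fin n => i + (nextStep s i : Fin n) := by
  intro i j hij
  simp only at hij
  by_contra hne
  have hsij : s i j := s.trans' (s.symm' (hij ▸ rel_add_nextStep i)) (rel_add_nextStep j)
  have hd := fwdDist_add_fwdDist hne
  have hi := nextStep_le_fwdDist hsij hne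
  have hj := nextStep_le_fwdDist (s.symm' hsij) (Ne.symm hne)
  have hi0 := nextStep_pos (s := s) i
  have hj0 := nextStep_pos (s := s) j
  have key : i + (nextStep s i : Fin n) = i + ((fwdDist i j + nextStep s j : ℕ) : Fin n) := by
    rw [← add_natCast_add_natCast, add_fwdDist]; exact hij
  have := fwdDist_lt i j
  rw [add_natCast_inj, Nat.mod_eq_of_lt (a := nextStep s i) (by omega)] at key
  rcases Nat.mod_eq_or_mod_eq_sub_of_lt_two_mul
    (show fwdDist i j + nextStep s j < 2 * n by omega) with h | h <;> omega

/-- The permutation sending each point to the next element of its class along the long cycle. -/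
noncomputable def nextPerm (s : Setoid (Fin n)) : Perm (Fin n) :=
  Equiv.ofBijective _ (Finite.injective_iff_bijective.mp (nextStep_injective (s := s)))

theorem nextPerm_apply (i : Fin n) : nextPerm s i = i + (nextStep s i : Fin n) := rfl

theorem rel_nextPerm_apply (i : Fin n) : s (nextPerm s i) i := rel_add_nextStep i

theorem nextPerm_apply_eq {i : Fin n} {k : ℕ} (hk : 0 < k) (hrel : s (i + (k : Fin n)) i)
    (hmin : ∀ j, 0 < j → j < k → ¬s (i + (j : Fin n)) i) : nextPerm s i = i + (k : Fin n) := by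
  rw [nextPerm_apply, nextStep_eq hk hrel hmin]

theorem sameCycle_nextPerm_iff {i j : Fin n} : (nextPerm s).SameCycle i j ↔ s i j := by
  refine ⟨fun h => h.rel_of_forall_rel_apply s.iseqv fun x => s.symm' (rel_nextPerm_apply x), ?_⟩
  induction hd : fwdDist i j using Nat.strong_induction_on generalizing i with
  | _ d ih =>
  intro hij
  rcases d.eq_zero_or_pos with rfl | hd0
  · rw [fwdDist_eq_zero_iff.mp hd]
  have hle : nextStep s i ≤ d := nextStep_le hd0 (by rw [← hd, add_fwdDist]; exact s.symm' hij)
  have hnext : fwdDist (nextPerm s i) j = d - nextStep s i := by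
    obtain ⟨e, he⟩ := Nat.exists_eq_add_of_le hle
    have := fwdDist_lt i j
    rw [← add_fwdDist i j, hd, nextPerm_apply, he, ← add_natCast_add_natCast,
      fwdDist_add_natCast_of_lt _ (by omega), Nat.add_sub_cancel_left]
  exact (sameCycle_apply_right.mpr (SameCycle.refl _ i)).trans
    (ih _ (by have := nextStep_pos (s := s) i; omega) hnext (s.trans' (rel_nextPerm_apply i) hij))

theorem sameCycle_setoid_nextPerm (s : Setoid (Fin n)) : SameCycle.setoid (nextPerm s) = s :=
  Setoid.ext fun _ _ => sameCycle_nextPerm_iff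

theorem nextPerm_top : nextPerm (⊤ : Setoid (Fin n)) = finRotate n := by
  ext i
  rw [nextPerm_apply_eq (k := 1) one_pos trivial (fun j hj hj1 => absurd hj1 (by omega)),
    finRotate_apply, Nat.cast_one]

end NextPerm

section Noncrossing

variable {n : ℕ}

/-- `z` lies on the arc `(a, b]` of the long cycle. -/
def InArc (a b z : Fin n) : Prop := 0 < fwdDist a z ∧ fwdDist a z ≤ fwdDist a b

theorem inArc_add_natCast_iff [NeZero n] {a b : Fin n} {p : ℕ} (hp : p < n) :
    InArc a b (a + (p : Fin n)) ↔ 0 < p ∧ p ≤ fwdDist a b := by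
  rw [InArc, fwdDist_add_natCast_of_lt a hp]

/-- The class of `a` cut into its parts on the arcs `(a, b]` and `(b, a]`. -/
def splitSetoid (s : Setoid (Fin n)) (a b : Fin n) : Setoid (Fin n) where
  r z z' := s z z' ∧ (s z a → (InArc a b z ↔ InArc a b z'))
  iseqv :=
    { refl := fun z => ⟨s.refl' z, fun _ => Iff.rfl⟩
      symm := fun ⟨h₁, h₂⟩ => ⟨s.symm' h₁, fun h => (h₂ (s.trans' h₁ h)).symm⟩
      trans := fun ⟨h₁, h₂⟩ ⟨h₁', h₂'⟩ =>
        ⟨s.trans' h₁ h₁', fun h => (h₂ h).trans (h₂' (s.trans' (s.symm' h₁) h))⟩ }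

variable [NeZero n] {s t : Setoid (Fin n)}

/-- Crossing chords `i — i + q` and `i + p — i + r` of the `n`-gon lie in one class. -/
def IsNoncrossing (s : Setoid (Fin n)) : Prop :=
  ∀ (i : Fin n) (p q r : ℕ), 0 < p → p < q → q < r → r < n →
    s i (i + (q : Fin n)) → s (i + (p : Fin n)) (i + (r : Fin n)) → s i (i + (p : Fin n))

theorem isNoncrossing_top : IsNoncrossing (⊤ : Setoid (Fin n)) :=
  fun _ _ _ _ _ _ _ _ _ _ => trivial

theorem IsNoncrossing.inf (hs : IsNoncrossing s) (ht : IsNoncrossing t) :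
    IsNoncrossing (s ⊓ t) := fun i p q r h₁ h₂ h₃ h₄ hq hpr =>
  ⟨hs i p q r h₁ h₂ h₃ h₄ hq.1 hpr.1, ht i p q r h₁ h₂ h₃ h₄ hq.2 hpr.2⟩

theorem IsNoncrossing.splitSetoid (hs : IsNoncrossing s) {a b : Fin n} (hab : a ≠ b) :
    IsNoncrossing (splitSetoid s a b) := by
  intro i p q r hp hpq hqr hr hq hpr
  have hip : s i (i + (p : Fin n)) := hs i p q r hp hpq hqr hr hq.1 hpr.1
  refine ⟨hip, fun hia => ?_⟩
  have harcq := hq.2 hia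
  have harcr := hpr.2 (s.trans' (s.symm' hip) hia)
  have := fwdDist_pos hab
  have := fwdDist_lt a b
  have := fwdDist_lt a i
  simp only [InArc, fwdDist_add_natCast'] at harcq harcr ⊢
  -- an arc cannot contain `i` and `i + q` but neither `i + p` nor `i + r`, nor the reverse
  rcases Nat.mod_eq_or_mod_eq_sub_of_lt_two_mul (show fwdDist a i + p < 2 * n by omega)
    with h | h <;>
  rcases Nat.mod_eq_or_mod_eq_sub_of_lt_two_mul (show fwdDist a i + q < 2 * n by omega)
    with h' | h' <;>
  rcases Nat.mod_eq_or_mod_eq_sub_of_lt_two_mul (show fwdDist a i + r < 2 * n by omega)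
    with h'' | h'' <;>
  omega

end Noncrossing

section Splitting

variable {n : ℕ} [NeZero n] {s : Setoid (Fin n)} {a b : Fin n}

theorem add_natCast_sub_fwdDist (a b : Fin n) {j : ℕ} (hj : fwdDist a b ≤ j) :
    b + ((j - fwdDist a b : ℕ) : Fin n) = a + (j : Fin n) :=
  calc b + ((j - fwdDist a b : ℕ) : Fin n)
      = a + (fwdDist a b : Fin n) + ((j - fwdDist a b : ℕ) : Fin n) := by rw [add_fwdDist]
    _ = a + (j : Fin n) := by rw [add_natCast_add_natCast, Nat.add_sub_cancel' hj]

theorem nextPerm_splitSetoid_apply_left (hab : a ≠ b) (h : s a b) :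
    nextPerm (splitSetoid s a b) a = nextPerm s b := by
  have hβ := fwdDist_pos hab
  have := fwdDist_add_fwdDist hab
  have hkb : nextStep s b ≤ fwdDist b a := nextStep_le_fwdDist (s.symm' h) (Ne.symm hab)
  have hpos := nextStep_pos (s := s) b
  have hb : nextPerm s b = a + ((fwdDist a b + nextStep s b : ℕ) : Fin n) := by
    rw [nextPerm_apply, ← add_natCast_add_natCast, add_fwdDist]
  rw [hb]
  refine nextPerm_apply_eq (by omega) ⟨?_, fun _ => ?_⟩ fun j hj hjk hrel => ?_
  · rw [← hb]
    exact s.trans' (rel_nextPerm_apply b) (s.symm' h)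
  · simp only [InArc, fwdDist_self, fwdDist_add_natCast]
    rcases Nat.mod_eq_or_mod_eq_sub_of_lt_two_mul
      (show fwdDist a b + nextStep s b < 2 * n by omega) with h' | h' <;> omega
  · rcases Nat.lt_or_ge (fwdDist a b) j with hjb | hjb
    · apply not_rel_of_lt_nextStep (s := s) (i := b) (j := j - fwdDist a b) (by omega) (by omega)
      rw [add_natCast_sub_fwdDist a b hjb.le]
      exact s.trans' hrel.1 h
    · have := hrel.2 hrel.1
      rw [inArc_add_natCast_iff (by omega), InArc, fwdDist_self] at this
      omega

theorem nextPerm_splitSetoid_apply_right (hab : a ≠ b) (h : s a b) :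
    nextPerm (splitSetoid s a b) b = nextPerm s a := by
  have hβ := fwdDist_pos hab
  have := fwdDist_add_fwdDist hab
  have := fwdDist_pos (Ne.symm hab)
  have hka : nextStep s a ≤ fwdDist a b := nextStep_le_fwdDist h hab
  have hpos := nextStep_pos (s := s) a
  have ha : nextPerm s a = b + ((fwdDist b a + nextStep s a : ℕ) : Fin n) := by
    rw [nextPerm_apply, ← add_natCast_add_natCast, add_fwdDist]
  have harc_a : InArc a b (nextPerm s a) := by
    rw [nextPerm_apply, inArc_add_natCast_iff (by omega)]
    exact ⟨hpos, hka⟩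
  have harc_b : InArc a b b := ⟨hβ, le_rfl⟩
  rw [ha]
  refine nextPerm_apply_eq (by omega) ⟨?_, fun _ => ?_⟩ fun j hj hjk hrel => ?_
  · rw [← ha]
    exact s.trans' (rel_nextPerm_apply a) h
  · rw [← ha]
    exact iff_of_true harc_a harc_b
  · have hja : s (b + (j : Fin n)) a := s.trans' hrel.1 (s.symm' h)
    have harc := (hrel.2 hja).mpr harc_b
    have hdist : fwdDist a (b + (j : Fin n)) = (fwdDist a b + j) % n := fwdDist_add_natCast' a b j
    rw [InArc, hdist] at harc
    apply not_rel_of_lt_nextStep (s := s) (i := a) (j := fwdDist a (b + (j : Fin n)))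
    · rw [hdist]; exact harc.1
    · rw [hdist]
      rcases Nat.mod_eq_or_mod_eq_sub_of_lt_two_mul
        (show fwdDist a b + j < 2 * n by omega) with h' | h' <;> omega
    · rw [add_fwdDist]; exact hja

theorem nextPerm_splitSetoid_apply_of_ne (h : s a b) {z : Fin n} (hza : z ≠ a) (hzb : z ≠ b) :
    nextPerm (splitSetoid s a b) z = nextPerm s z := by
  refine (nextPerm_apply_eq (s := splitSetoid s a b) (nextStep_pos z)
    ⟨rel_add_nextStep z, fun hza' => ?_⟩
    fun j hj hjk hrel => not_rel_of_lt_nextStep hj hjk hrel.1).trans (nextPerm_apply z).symm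
  have hsz : s z a := s.trans' (s.symm' (rel_add_nextStep z)) hza'
  have ht := fwdDist_pos (Ne.symm hza)
  have hβ := fwdDist_lt a b
  have := fwdDist_lt a z
  have hk := nextStep_pos (s := s) z
  have htβ : fwdDist a z ≠ fwdDist a b := fun h' => hzb (by rw [← add_fwdDist a z, h', add_fwdDist])
  simp only [InArc, fwdDist_add_natCast']
  rcases Nat.lt_or_gt_of_ne htβ with hlt | hgt
  · have : nextStep s z ≤ fwdDist a b - fwdDist a z := nextStep_le (by omega) (by
      rw [add_natCast_sub_fwdDist a z hlt.le, add_fwdDist]; exact s.symm' (s.trans' hsz h))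
    rw [Nat.mod_eq_of_lt (by omega)]
    omega
  · have : nextStep s z ≤ n - fwdDist a z := nextStep_le (by omega) (by
      rw [add_natCast_sub_fwdDist a z (by omega), add_natCast_self]; exact s.symm' hsz)
    rcases Nat.mod_eq_or_mod_eq_sub_of_lt_two_mul
      (show fwdDist a z + nextStep s z < 2 * n by omega) with h' | h' <;> omega

theorem nextPerm_mul_swap (hab : a ≠ b) (h : s a b) :
    nextPerm s * swap a b = nextPerm (splitSetoid s a b) := by
  ext z
  rw [mul_apply]
  by_cases hza : z = a
  · rw [hza, swap_apply_left, nextPerm_splitSetoid_apply_left hab h]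
  by_cases hzb : z = b
  · rw [hzb, swap_apply_right, nextPerm_splitSetoid_apply_right hab h]
  rw [swap_apply_of_ne_of_ne hza hzb, nextPerm_splitSetoid_apply_of_ne h hza hzb]

end Splitting

section Refinement

variable {n : ℕ} [NeZero n] {s t : Setoid (Fin n)}

theorem exists_not_rel_nextPerm_apply (h : ¬t ≤ s) : ∃ a, ¬s a (nextPerm t a) := by
  by_contra! hall
  exact h fun x y hxy => (sameCycle_nextPerm_iff.mpr hxy).rel_of_forall_rel_apply s.iseqv hall

theorem exists_last_rel_add_natCast (a : Fin n) {c : Fin n} {k : ℕ} (hk : k < n)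
    (h : s (a + (k : Fin n)) c) : ∃ M < n, s (a + (M : Fin n)) c ∧
      ∀ m < n, s (a + (m : Fin n)) c → m ≤ M := by
  classical
  let P (m : ℕ) : Prop := s (a + (m : Fin n)) c
  have hkn : k ≤ n - 1 := by omega
  have hM := Nat.findGreatest_le (P := P) (n - 1)
  exact ⟨_, by omega, Nat.findGreatest_spec (P := P) hkn h,
    fun m hm hm' => Nat.le_findGreatest (P := P) (by omega) hm'⟩

/-- If `a` is not related to `a + k` and `a + M` is the last point of the class of `a + k` seen
from `a`, then by noncrossing the arc from `a + k` to `a + M` is a union of classes. -/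
theorem IsNoncrossing.mem_Ioc_of_rel (hs : IsNoncrossing s) {a : Fin n} {k M p p' : ℕ}
    (hk0 : 0 < k) (hMn : M < n) (ha : ¬s a (a + (k : Fin n)))
    (hM : s (a + (M : Fin n)) (a + (k : Fin n)))
    (hlast : ∀ m < n, s (a + (m : Fin n)) (a + (k : Fin n)) → m ≤ M)
    (hp' : p' < n) (hkp : k ≤ p) (hpM : p ≤ M) (hpp' : s (a + (p : Fin n)) (a + (p' : Fin n))) :
    p' ∈ Set.Ioc 0 M := by
  set c := a + (k : Fin n)
  by_cases hpc : s (a + (p : Fin n)) c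
  · have hp'c := s.trans' (s.symm' hpp') hpc
    exact ⟨Nat.pos_of_ne_zero fun h0 => ha (by simpa [h0] using hp'c), hlast p' hp' hp'c⟩
  have hkp' : k < p := hkp.lt_of_ne fun h => hpc (by rw [← h])
  have hpM' : p < M := hpM.lt_of_ne fun h => hpc (by rw [h]; exact hM)
  by_contra hout
  rcases (by simp only [Set.mem_Ioc, not_and_or, not_lt, not_le] at hout; omega :
    p' = 0 ∨ M < p') with rfl | hMp'
  · refine ha (hs a k p M hk0 hkp' hpM' hMn ?_ (s.symm' hM))
    simpa using s.symm' hpp'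
  · have hc : ∀ m, k ≤ m → c + ((m - k : ℕ) : Fin n) = a + (m : Fin n) := fun m hm => by
      rw [add_natCast_add_natCast, Nat.add_sub_cancel' hm]
    have := hs c (p - k) (M - k) (p' - k) (by omega) (by omega) (by omega) (by omega)
    rw [hc p hkp, hc M (hkp.trans hpM), hc p' (by omega)] at this
    exact hpc (s.symm' (this (s.symm' hM) hpp'))

theorem exists_le_splitSetoid (hs : IsNoncrossing s) (hst : s ≤ t) (hne : ¬t ≤ s) :
    ∃ a b, a ≠ b ∧ t a b ∧ s ≤ splitSetoid t a b := by
  obtain ⟨a, ha⟩ := exists_not_rel_nextPerm_apply hne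
  rw [nextPerm_apply] at ha
  have hkn : nextStep t a < n :=
    (nextStep_le_card a).lt_of_ne fun h => ha (by rw [h, add_natCast_self])
  obtain ⟨M, hMn, hM, hlast⟩ := exists_last_rel_add_natCast a hkn (s.refl' _)
  refine ⟨a, a + (M : Fin n), fun h => ha (by rwa [← h] at hM),
    t.trans' (t.symm' (rel_add_nextStep a)) (hst (s.symm' hM)),
    fun z z' hzz' => ⟨hst hzz', fun hza => ?_⟩⟩
  obtain ⟨p, hp, rfl⟩ : ∃ p < n, a + (p : Fin n) = z := ⟨_, fwdDist_lt a z, add_fwdDist a z⟩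
  obtain ⟨p', hp', rfl⟩ : ∃ p < n, a + (p : Fin n) = z' := ⟨_, fwdDist_lt a z', add_fwdDist a z'⟩
  have hkp : ∀ {q : ℕ}, t (a + (q : Fin n)) a → 0 < q → nextStep t a ≤ q :=
    fun hq hq0 => not_lt.mp fun hlt => not_rel_of_lt_nextStep hq0 hlt hq
  have hza' : t (a + (p' : Fin n)) a := t.trans' (t.symm' (hst hzz')) hza
  rw [inArc_add_natCast_iff hp, inArc_add_natCast_iff hp', fwdDist_add_natCast_of_lt a hMn]
  exact ⟨fun ⟨h₀, h₁⟩ =>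
      hs.mem_Ioc_of_rel (nextStep_pos a) hMn ha hM hlast hp' (hkp hza h₀) h₁ hzz',
    fun ⟨h₀, h₁⟩ =>
      hs.mem_Ioc_of_rel (nextStep_pos a) hMn ha hM hlast hp (hkp hza' h₀) h₁ (s.symm' hzz')⟩

end Refinement

section NoncrossingPartitions

variable {n : ℕ} [NeZero n] {s t : Setoid (Fin n)} {x y : Perm (Fin n)}

theorem nextPerm_absLe_nextPerm (hs : IsNoncrossing s) (ht : IsNoncrossing t) (hst : s ≤ t) :
    absLe (nextPerm s) (nextPerm t) := by
  induction hk : reflLen (nextPerm t) using Nat.strong_induction_on generalizing t with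
  | _ k ih =>
  by_cases hts : t ≤ s
  · rw [le_antisymm hst hts]
    exact absLe_refl _
  obtain ⟨a, b, hab, htab, hsplit⟩ := exists_le_splitSetoid hs hst hts
  have hsc : (nextPerm t).SameCycle a b := sameCycle_nextPerm_iff.mpr htab
  have hstep := absLe_mul_swap hab hsc
  have hlen := reflLen_mul_swap_add_one hab hsc
  rw [nextPerm_mul_swap hab htab] at hstep hlen
  exact absLe_trans (ih _ (by omega) (ht.splitSetoid hab) hsplit rfl) hstep

theorem exists_nextPerm_eq_of_absLe_finRotate (hx : absLe x (finRotate n)) :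
    ∃ s, IsNoncrossing s ∧ nextPerm s = x := by
  induction hk : reflLen (finRotate n) - reflLen x using Nat.strong_induction_on generalizing x with
  | _ k ih =>
  by_cases hxw : x = finRotate n
  · exact ⟨⊤, isNoncrossing_top, hxw ▸ nextPerm_top⟩
  obtain ⟨a, b, hyw, hlt⟩ := exists_mul_swap_absLe hx hxw
  have := reflLen_le_of_absLe hyw
  obtain ⟨t, ht, hty⟩ := ih _ (by omega) hyw rfl
  have hab : a ≠ b := by rintro rfl; simp [swap_self, ← Perm.one_def] at hlt
  have hsc : t a b := by
    rw [← sameCycle_nextPerm_iff, hty]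
    exact SameCycle.of_reflLen_mul_swap_lt (by rwa [mul_swap_mul_self])
  refine ⟨splitSetoid t a b, ht.splitSetoid hab, ?_⟩
  rw [← nextPerm_mul_swap hab hsc, hty, mul_swap_mul_self]

theorem absLe_finRotate_iff : absLe x (finRotate n) ↔ ∃ s, IsNoncrossing s ∧ nextPerm s = x := by
  refine ⟨exists_nextPerm_eq_of_absLe_finRotate, ?_⟩
  rintro ⟨s, hs, rfl⟩
  simpa [nextPerm_top] using nextPerm_absLe_nextPerm hs isNoncrossing_top le_top

theorem absLe_iff_sameCycle_setoid_le (hx : absLe x (finRotate n)) (hy : absLe y (finRotate n)) :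
    absLe x y ↔ SameCycle.setoid x ≤ SameCycle.setoid y := by
  refine ⟨fun h _ _ => SameCycle.of_absLe h, fun h => ?_⟩
  obtain ⟨s, hs, rfl⟩ := absLe_finRotate_iff.mp hx
  obtain ⟨t, ht, rfl⟩ := absLe_finRotate_iff.mp hy
  rw [sameCycle_setoid_nextPerm, sameCycle_setoid_nextPerm] at h
  exact nextPerm_absLe_nextPerm hs ht h

theorem exists_meet {u v : Perm (Fin n)} (hu : absLe u (finRotate n)) (hv : absLe v (finRotate n)) :
    ∃ m, absLe m (finRotate n) ∧ absLe m u ∧ absLe m v ∧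
      ∀ z, absLe z (finRotate n) → absLe z u → absLe z v → absLe z m := by
  obtain ⟨s, hs, rfl⟩ := absLe_finRotate_iff.mp hu
  obtain ⟨t, ht, rfl⟩ := absLe_finRotate_iff.mp hv
  have hm : absLe (nextPerm (s ⊓ t)) (finRotate n) := absLe_finRotate_iff.mpr ⟨_, hs.inf ht, rfl⟩
  refine ⟨_, hm, ?_, ?_, fun z hz hzu hzv => ?_⟩
  · rw [absLe_iff_sameCycle_setoid_le hm hu, sameCycle_setoid_nextPerm, sameCycle_setoid_nextPerm]
    exact inf_le_left
  · rw [absLe_iff_sameCycle_setoid_le hm hv, sameCycle_setoid_nextPerm, sameCycle_setoid_nextPerm]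
    exact inf_le_right
  rw [absLe_iff_sameCycle_setoid_le hz hu, sameCycle_setoid_nextPerm] at hzu
  rw [absLe_iff_sameCycle_setoid_le hz hv, sameCycle_setoid_nextPerm] at hzv
  rw [absLe_iff_sameCycle_setoid_le hz hm, sameCycle_setoid_nextPerm]
  exact le_inf hzu hzv

end NoncrossingPartitions

/-- The noncrossing partition poset `NC(S_n, w) = [1, w]`, `w = (1 2 ... n)`, is a lattice:
every pair of elements has a least upper bound and a greatest lower bound. -/
theorem noncrossingPartition_lattice (n : ℕ) (u v : Perm (Fin n))
    (hu : absLe u (finRotate n)) (hv : absLe v (finRotate n)) :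
    (∃ m : Perm (Fin n), absLe m (finRotate n) ∧ absLe u m ∧ absLe v m ∧
      ∀ z : Perm (Fin n), absLe z (finRotate n) → absLe u z → absLe v z → absLe m z) ∧
    (∃ m : Perm (Fin n), absLe m (finRotate n) ∧ absLe m u ∧ absLe m v ∧
      ∀ z : Perm (Fin n), absLe z (finRotate n) → absLe z u → absLe z v → absLe z m) := by
  have hmeet : ∀ u v : Perm (Fin n), absLe u (finRotate n) → absLe v (finRotate n) →
      ∃ m, absLe m (finRotate n) ∧ absLe m u ∧ absLe m v ∧
        ∀ z, absLe z (finRotate n) → absLe z u → absLe z v → absLe z m := by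
    rcases n.eq_zero_or_pos with rfl | hn
    · have hall (x y : Perm (Fin 0)) : absLe x y := Subsingleton.elim x y ▸ absLe_refl x
      exact fun u v _ _ => ⟨u, hall _ _, hall _ _, hall _ _, fun _ _ _ _ => hall _ _⟩
    · have : NeZero n := ⟨hn.ne'⟩
      exact fun u v => exists_meet
  exact ⟨exists_join_of_exists_meet hmeet hu hv, hmeet u v hu hv⟩
end

section
/- The group with presentation ⟨a, b, c | ab = bc = ca⟩ is isomorphic to the braid group on three strands ⟨s, t | sts = tst⟩. -/
/-- Relations of the dual presentation `⟨a, b, c | ab = bc = ca⟩`: generators indexed by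
`Fin 3` (`a = 0`, `b = 1`, `c = 2`). -/
def dualRels : Set (FreeGroup (Fin 3)) :=
  {FreeGroup.of 0 * FreeGroup.of 1 * (FreeGroup.of 1 * FreeGroup.of 2)⁻¹,
   FreeGroup.of 1 * FreeGroup.of 2 * (FreeGroup.of 2 * FreeGroup.of 0)⁻¹}

/-- Relation of the braid group on three strands `⟨s, t | sts = tst⟩`: generators indexed
by `Fin 2` (`s = 0`, `t = 1`). -/
def braidRels : Set (FreeGroup (Fin 2)) :=
  {FreeGroup.of 0 * FreeGroup.of 1 * FreeGroup.of 0 *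
    (FreeGroup.of 1 * FreeGroup.of 0 * FreeGroup.of 1)⁻¹}

private lemma braid_rel :
    (PresentedGroup.of 0 * PresentedGroup.of 1 * PresentedGroup.of 0 :
      PresentedGroup braidRels) =
    PresentedGroup.of 1 * PresentedGroup.of 0 * PresentedGroup.of 1 := by
  have h : (PresentedGroup.mk braidRels)
      (FreeGroup.of 0 * FreeGroup.of 1 * FreeGroup.of 0 *
        (FreeGroup.of 1 * FreeGroup.of 0 * FreeGroup.of 1)⁻¹) = 1 := by
    refine (QuotientGroup.eq_one_iff _).2 ?_
    exact Subgroup.subset_normalClosure (by simp [braidRels])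
  simp only [map_mul, map_inv] at h
  rw [mul_inv_eq_one] at h
  exact h

private lemma dual_rel1 :
    (PresentedGroup.of 0 * PresentedGroup.of 1 : PresentedGroup dualRels) =
    PresentedGroup.of 1 * PresentedGroup.of 2 := by
  have h : (PresentedGroup.mk dualRels)
      (FreeGroup.of 0 * FreeGroup.of 1 * (FreeGroup.of 1 * FreeGroup.of 2)⁻¹) = 1 := by
    refine (QuotientGroup.eq_one_iff _).2 ?_
    exact Subgroup.subset_normalClosure (by simp [dualRels])
  simp only [map_mul, map_inv] at h
  rw [mul_inv_eq_one] at h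
  exact h

private lemma dual_rel2 :
    (PresentedGroup.of 1 * PresentedGroup.of 2 : PresentedGroup dualRels) =
    PresentedGroup.of 2 * PresentedGroup.of 0 := by
  have h : (PresentedGroup.mk dualRels)
      (FreeGroup.of 1 * FreeGroup.of 2 * (FreeGroup.of 2 * FreeGroup.of 0)⁻¹) = 1 := by
    refine (QuotientGroup.eq_one_iff _).2 ?_
    exact Subgroup.subset_normalClosure (by simp [dualRels])
  simp only [map_mul, map_inv] at h
  rw [mul_inv_eq_one] at h
  exact h

/-- images of dual generators in the braid group: a ↦ s, b ↦ t, c ↦ sts⁻¹ -/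
private def fφ : Fin 3 → PresentedGroup braidRels :=
  ![PresentedGroup.of 0, PresentedGroup.of 1,
    PresentedGroup.of 0 * PresentedGroup.of 1 * (PresentedGroup.of 0)⁻¹]

/-- images of braid generators in the dual group: s ↦ a, t ↦ b -/
private def fψ : Fin 2 → PresentedGroup dualRels :=
  ![PresentedGroup.of 0, PresentedGroup.of 1]

private lemma hφ : ∀ r ∈ dualRels, FreeGroup.lift fφ r = 1 := by
  intro r hr
  have hb := braid_rel
  rcases hr with h | h <;> subst h <;>
    simp only [map_mul, map_inv, FreeGroup.lift_apply_of, fφ, Matrix.cons_val_zero,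
      Matrix.cons_val_one, Matrix.head_cons, Matrix.cons_val_two, Matrix.tail_cons] <;>
    rw [mul_inv_eq_one]
  · -- ab = bc : s*t = t*(s t s⁻¹)
    rw [← mul_assoc, ← mul_assoc, ← hb]; group
  · -- bc = ca : t*(s t s⁻¹) = (s t s⁻¹)*s
    rw [← mul_assoc, ← mul_assoc, ← hb]; group

private lemma dual_aba :
    (PresentedGroup.of 0 * PresentedGroup.of 1 * PresentedGroup.of 0 :
      PresentedGroup dualRels) =
    PresentedGroup.of 1 * PresentedGroup.of 0 * PresentedGroup.of 1 := by
  rw [dual_rel1, mul_assoc, ← dual_rel2, ← dual_rel1, ← mul_assoc]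

private lemma hψ : ∀ r ∈ braidRels, FreeGroup.lift fψ r = 1 := by
  intro r hr
  simp only [braidRels, Set.mem_singleton_iff] at hr
  subst hr
  simp only [map_mul, map_inv, FreeGroup.lift_apply_of, fψ, Matrix.cons_val_zero,
    Matrix.cons_val_one, Matrix.head_cons]
  rw [mul_inv_eq_one]
  exact dual_aba

/-- The group `⟨a, b, c | ab = bc = ca⟩` is isomorphic to the braid group on three
strands `⟨s, t | sts = tst⟩`. -/
theorem dual_presentation_iso_braid :
    Nonempty (PresentedGroup dualRels ≃* PresentedGroup braidRels) := by
  let φ := PresentedGroup.toGroup hφ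
  let ψ := PresentedGroup.toGroup hψ
  refine ⟨MonoidHom.toMulEquiv φ ψ ?_ ?_⟩
  · ext x
    fin_cases x
    · simp [φ, ψ, fφ, fψ]
    · simp [φ, ψ, fφ, fψ]
    · show ψ (φ (PresentedGroup.of 2)) = PresentedGroup.of 2
      simp only [φ, ψ, PresentedGroup.toGroup.of, fφ, fψ, Matrix.cons_val_two,
        Matrix.tail_cons, Matrix.head_cons, map_mul, map_inv, Matrix.cons_val_zero,
        Matrix.cons_val_one]
      rw [dual_rel1, dual_rel2, mul_inv_cancel_right]
  · ext x
    fin_cases x <;> simp [φ, ψ, fφ, fψ]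
end

section
/- The dual Artin group of type Ã₁, with presentation ⟨a_i (i ∈ ℤ) | a_{i+1} a_i = a_{j+1} a_j for all i, j ∈ ℤ⟩, is isomorphic to the standard Artin group of type Ã₁, the free group on two generators ⟨a₀, a₁⟩ (no relations). -/
/-- Relations of the dual Artin group of type `Ã₁`: generators `aᵢ` for `i ∈ ℤ` and
relations `a_{i+1} aᵢ = a_{j+1} aⱼ` for all `i, j ∈ ℤ`. -/
def dualArtinA1Rels : Set (FreeGroup ℤ) :=
  {r | ∃ i j : ℤ, r = FreeGroup.of (i + 1) * FreeGroup.of i *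
    (FreeGroup.of (j + 1) * FreeGroup.of j)⁻¹}

/-!
Every relation says `a_{i+1} aᵢ = w` with `w = a₁ a₀`, so `a_{i+1} = w aᵢ⁻¹` and
`a_{i-1} = aᵢ⁻¹ w`: all generators are words in `a₀, a₁`. Conversely, in the free group on
`x, y` the elements `a_{2k} = wᵏ x w⁻ᵏ`, `a_{2k+1} = wᵏ y w⁻ᵏ` with `w = y x` satisfy every
relation. The two induced homomorphisms are mutually inverse, because a sequence with
`a_{i+1} aᵢ = w` for all `i` is determined by `a₀`.
-/

namespace DualArtinA1

section Recurrence

variable {G : Type*} [Group G]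

theorem seq_eq_of_succ_mul_eq {f g : ℤ → G} {c : G} (hf : ∀ i, f (i + 1) * f i = c)
    (hg : ∀ i, g (i + 1) * g i = c) (h₀ : f 0 = g 0) : f = g := by
  funext i
  induction i using Int.induction_on with
  | zero => exact h₀
  | succ n ih =>
    rw [eq_mul_inv_of_mul_eq (hf n), eq_mul_inv_of_mul_eq (hg n), ih]
  | pred n ih =>
    have hfn := hf (-n - 1)
    have hgn := hg (-n - 1)
    rw [sub_add_cancel] at hfn hgn
    rw [eq_inv_mul_of_mul_eq hfn, eq_inv_mul_of_mul_eq hgn, ih]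

/-- The elements `aᵢ` of the dual presentation, as words in `a₀ = x` and `a₁ = y`. -/
def dualGen (x y : G) (i : ℤ) : G :=
  (y * x) ^ (i / 2) * (if i % 2 = 0 then x else y) * (y * x) ^ (-(i / 2))

variable (x y : G)

theorem dualGen_two_mul (k : ℤ) : dualGen x y (2 * k) = (y * x) ^ k * x * (y * x) ^ (-k) := by
  simp [dualGen]

theorem dualGen_two_mul_add_one (k : ℤ) :
    dualGen x y (2 * k + 1) = (y * x) ^ k * y * (y * x) ^ (-k) := by
  have hdiv : (2 * k + 1) / 2 = k := by omega
  have hmod : (2 * k + 1) % 2 = 1 := by omega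
  simp [dualGen, hdiv, hmod]

@[simp]
theorem dualGen_zero : dualGen x y 0 = x := by
  simpa using dualGen_two_mul x y 0

@[simp]
theorem dualGen_one : dualGen x y 1 = y := by
  simpa using dualGen_two_mul_add_one x y 0

theorem dualGen_succ_mul (i : ℤ) : dualGen x y (i + 1) * dualGen x y i = y * x := by
  set w := y * x with hw
  obtain ⟨k, rfl | rfl⟩ := Int.even_or_odd' i
  · rw [dualGen_two_mul_add_one, dualGen_two_mul]
    calc w ^ k * y * w ^ (-k) * (w ^ k * x * w ^ (-k)) = w ^ k * (y * x) * w ^ (-k) := by group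
      _ = w := by rw [← hw]; group
  · rw [show 2 * k + 1 + 1 = 2 * (k + 1) by ring, dualGen_two_mul, dualGen_two_mul_add_one]
    calc w ^ (k + 1) * x * w ^ (-(k + 1)) * (w ^ k * y * w ^ (-k))
        = w ^ (k + 1) * (x * w⁻¹ * y) * w ^ (-k) := by group
      _ = w := by rw [hw, mul_inv_rev]; group

end Recurrence

open PresentedGroup

theorem of_succ_mul_of (i : ℤ) :
    (of (i + 1) * of i : PresentedGroup dualArtinA1Rels) = of 1 * of 0 :=
  mk_eq_mk_of_mul_inv_mem ⟨i, 0, by simp⟩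

def toFreeGroup : PresentedGroup dualArtinA1Rels →* FreeGroup (Fin 2) :=
  toGroup (f := dualGen (FreeGroup.of 0) (FreeGroup.of 1)) <| by
    rintro _ ⟨i, j, rfl⟩
    simp only [map_mul, map_inv, FreeGroup.lift_apply_of, dualGen_succ_mul, mul_inv_cancel]

def ofFreeGroup : FreeGroup (Fin 2) →* PresentedGroup dualArtinA1Rels :=
  FreeGroup.lift fun x => of (x : ℤ)

theorem ofFreeGroup_dualGen (i : ℤ) :
    ofFreeGroup (dualGen (FreeGroup.of 0) (FreeGroup.of 1) i) = of i := by
  refine congrFun (seq_eq_of_succ_mul_eq (f := fun i => ofFreeGroup (dualGen _ _ i))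
    (fun i => ?_) of_succ_mul_of ?_) i
  · rw [← map_mul, dualGen_succ_mul]
    simp [ofFreeGroup]
  · simp [ofFreeGroup]

end DualArtinA1

open DualArtinA1 in
/-- The dual Artin group of type `Ã₁` is isomorphic to the standard Artin group of type
`Ã₁`, i.e. the free group on two generators, via an isomorphism sending `a₀, a₁` to the
two free generators. -/
theorem dualArtinA1_iso_freeGroup :
    ∃ φ : PresentedGroup dualArtinA1Rels ≃* FreeGroup (Fin 2),
      φ (PresentedGroup.of 0) = FreeGroup.of 0 ∧
      φ (PresentedGroup.of 1) = FreeGroup.of 1 := by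
  have left_inv : ofFreeGroup.comp toFreeGroup = MonoidHom.id _ :=
    PresentedGroup.ext fun i => by simpa [toFreeGroup] using ofFreeGroup_dualGen i
  have right_inv : toFreeGroup.comp ofFreeGroup = MonoidHom.id _ := by
    ext x
    fin_cases x <;> simp [toFreeGroup, ofFreeGroup]
  exact ⟨toFreeGroup.toMulEquiv ofFreeGroup left_inv right_inv,
    by simp [toFreeGroup], by simp [toFreeGroup]⟩
end
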